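/- arXiv:1911.00404 — 6 statements merged into one kernel-verified Lean document; each statement's English description precedes it below -/
import Mathlib

section
/- Let (A_k)_{k≥0} and (B_k)_{k≥0} be sequences of positive real numbers, γ₁, γ₂ ≥ 0 with γ₁ + γ₂ > 0, and p > 0, such that for all k ≥ 0: A_k − B_k ≥ γ₁ A_k², B_k − A_{k+1} ≥ γ₂ B_k², and A₀ ≤ 1/(p(γ₁ + γ₂)). Then for all k ≥ 0, A_k ≤ 1/((k + p)(γ₁ + γ₂)). -/
lemma step_aux (x y γ : ℝ) (hx : 0 < x) (hy : 0 < y) (hγ : 0 ≤ γ)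
    (h : γ * x ^ 2 ≤ x - y) : 1 / x + γ ≤ 1 / y := by
  have hyx : y ≤ x := by nlinarith
  rw [div_add' _ _ _ hx.ne', div_le_div_iff₀ hx hy]
  nlinarith

/-- sublinear rate from interleaved quadratic decrease: if
`(A_k)` and `(B_k)` are positive sequences (with `B_k` playing the role of the
half-index member `A_{k+1/2}`), `γ₁, γ₂ ≥ 0` with `γ₁ + γ₂ > 0`, `p > 0`,
`A_k − B_k ≥ γ₁ A_k²`, `B_k − A_{k+1} ≥ γ₂ B_k²` for all `k ≥ 0`, and
`A₀ ≤ 1/(p(γ₁ + γ₂))`, then `A_k ≤ 1/((k + p)(γ₁ + γ₂))` for all `k ≥ 0`. -/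
theorem stmt11 (A B : ℕ → ℝ) (γ₁ γ₂ p : ℝ)
    (hA : ∀ k : ℕ, 0 < A k) (hB : ∀ k : ℕ, 0 < B k)
    (hγ₁ : 0 ≤ γ₁) (hγ₂ : 0 ≤ γ₂) (hγ : 0 < γ₁ + γ₂) (hp : 0 < p)
    (h1 : ∀ k : ℕ, γ₁ * A k ^ 2 ≤ A k - B k)
    (h2 : ∀ k : ℕ, γ₂ * B k ^ 2 ≤ B k - A (k + 1))
    (h0 : A 0 ≤ 1 / (p * (γ₁ + γ₂))) :
    ∀ k : ℕ, A k ≤ 1 / (((k : ℝ) + p) * (γ₁ + γ₂)) := by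
  intro k
  induction k with
  | zero => simpa using h0
  | succ k ih =>
    have hk : (0:ℝ) < ((k:ℝ) + p) * (γ₁ + γ₂) := by positivity
    have hinv : ((k:ℝ) + p) * (γ₁ + γ₂) ≤ 1 / A k := by
      rw [le_div_iff₀ (hA k), mul_comm]
      exact (le_div_iff₀ hk).mp ih
    have s1 := step_aux (A k) (B k) γ₁ (hA k) (hB k) hγ₁ (h1 k)
    have s2 := step_aux (B k) (A (k + 1)) γ₂ (hB k) (hA (k + 1)) hγ₂ (h2 k)
    have hk1 : (0:ℝ) < ((k:ℝ) + 1 + p) * (γ₁ + γ₂) := by positivity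
    have hfin : ((k:ℝ) + 1 + p) * (γ₁ + γ₂) ≤ 1 / A (k + 1) := by nlinarith
    rw [le_div_iff₀ (hA (k + 1)), mul_comm] at hfin
    push_cast
    exact (le_div_iff₀ (by positivity)).mpr hfin
end

section
/- Let (A_k)_{k≥0} and (B_k)_{k≥0} be sequences of positive real numbers and γ₁, γ₂ ≥ 0 such that for all k ≥ 0: A_k − B_k ≥ γ₁ A_k² and B_k − A_{k+1} ≥ γ₂ B_k². Then (A_k) and the interleaved sequence A₀ ≥ B₀ ≥ A₁ ≥ B₁ ≥ ... are nonincreasing, and for every k ≥ 0 it holds that 1/A_{k+1} − 1/A_k ≥ γ₁ + γ₂. -/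
/-- monotonicity and inverse-gap growth for interleaved quadratic
decrease: if `(A_k)` and `(B_k)` are positive sequences (with `B_k` playing the role
of the half-index member `A_{k+1/2}`), `γ₁, γ₂ ≥ 0`, and for all `k ≥ 0` one has
`A_k − B_k ≥ γ₁ A_k²` and `B_k − A_{k+1} ≥ γ₂ B_k²`, then `(A_k)` and the interleaved
sequence `A₀ ≥ B₀ ≥ A₁ ≥ B₁ ≥ ...` are nonincreasing, and for every `k ≥ 0`,
`1/A_{k+1} − 1/A k ≥ γ₁ + γ₂`. -/
theorem stmt12 (A B : ℕ → ℝ) (γ₁ γ₂ : ℝ)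
    (hA : ∀ k : ℕ, 0 < A k) (hB : ∀ k : ℕ, 0 < B k)
    (hγ₁ : 0 ≤ γ₁) (hγ₂ : 0 ≤ γ₂)
    (h1 : ∀ k : ℕ, γ₁ * A k ^ 2 ≤ A k - B k)
    (h2 : ∀ k : ℕ, γ₂ * B k ^ 2 ≤ B k - A (k + 1)) :
    (∀ k : ℕ, A (k + 1) ≤ A k) ∧
    (∀ k : ℕ, B k ≤ A k) ∧
    (∀ k : ℕ, A (k + 1) ≤ B k) ∧
    (∀ k : ℕ, γ₁ + γ₂ ≤ 1 / A (k + 1) - 1 / A k) := by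
  have hBA : ∀ k : ℕ, B k ≤ A k := by
    intro k
    nlinarith [h1 k, mul_nonneg hγ₁ (sq_nonneg (A k))]
  have hAB : ∀ k : ℕ, A (k + 1) ≤ B k := by
    intro k
    nlinarith [h2 k, mul_nonneg hγ₂ (sq_nonneg (B k))]
  have hmono : ∀ k : ℕ, A (k + 1) ≤ A k := fun k => (hAB k).trans (hBA k)
  refine ⟨hmono, hBA, hAB, fun k => ?_⟩
  have hAk := hA k
  have hAk1 := hA (k + 1)
  have hBk := hB k
  have hstep1 : γ₁ ≤ 1 / B k - 1 / A k := by
    rw [div_sub_div _ _ (ne_of_gt hBk) (ne_of_gt hAk), le_div_iff₀ (by positivity)]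
    nlinarith [h1 k, mul_nonneg hγ₁ (mul_nonneg (sq_nonneg (A k)) hBk.le),
      mul_le_mul_of_nonneg_left (hBA k) (mul_nonneg hγ₁ hAk.le)]
  have hstep2 : γ₂ ≤ 1 / A (k + 1) - 1 / B k := by
    rw [div_sub_div _ _ (ne_of_gt hAk1) (ne_of_gt hBk), le_div_iff₀ (by positivity)]
    nlinarith [h2 k, mul_le_mul_of_nonneg_left (hAB k) (mul_nonneg hγ₂ hBk.le)]
  linarith
end

section
/- For every k ≥ 0, if H^k − H* > 2 min{L₁/β₁, L₂/β₂} R², then H^k − H* ≤ (1/2)^k (H⁰ − H*). Consequently, the minimal index m ≥ 0 such that H^m − H* ≤ 2 min{L₁/β₁, L₂/β₂} R² exists and satisfies m ≤ m* := max{0, −1 + ⌈log₂( (H⁰ − H*) / (min{L₁/β₁, L₂/β₂} R²) )⌉}. -/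
/-!
One alternating step already brings the gap below `min {L₁/β₁, L₂/β₂} R² / 2`. If, say,
`L₁/β₁` is the smaller ratio, then `H^{k+1} ≤ H(x₁*, x₂^k)`, and the block descent inequality,
the gradient inequality for `f` and the first-order optimality of `x₂^k` for `g₂` combine to
`H(x₁*, x₂^k) ≤ H* + L₁/2 ‖x₁* - x₁^k‖² ≤ H* + L₁/(2β₁) R²`. Hence the gap exceeds
`2 min {L₁/β₁, L₂/β₂} R²` at most for `k = 0`, so `m ≤ 1`, and `m = 1` forces the logarithm
in `m*` to exceed `1`.
-/

open Set

/-- The composite objective function `H(x₁,x₂) = f(x₁,x₂) + g₁(x₁) + g₂(x₂)`. -/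
noncomputable def objFun {B₁ B₂ : Type*} (f : B₁ × B₂ → ℝ) (g₁ : B₁ → ℝ) (g₂ : B₂ → ℝ)
    (x : B₁ × B₂) : ℝ :=
  f x + g₁ x.1 + g₂ x.2

open Filter Topology

section FirstOrder

variable {E : Type*} [NormedAddCommGroup E] [NormedSpace ℝ E] {S : Set E} {f g : E → ℝ}
  {f' : E →L[ℝ] ℝ} {w z : E}

theorem ConvexOn.apply_add_smul_sub_le (hf : ConvexOn ℝ S f) (hw : w ∈ S) (hz : z ∈ S)
    {t : ℝ} (ht : t ∈ Icc (0 : ℝ) 1) : f (w + t • (z - w)) ≤ f w + t * (f z - f w) := by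
  have h := hf.2 hw hz (sub_nonneg.2 ht.2) ht.1 (sub_add_cancel 1 t)
  rw [show (1 - t) • w + t • z = w + t • (z - w) by module, smul_eq_mul, smul_eq_mul] at h
  linarith

theorem HasFDerivWithinAt.tendsto_slope_segment (hf : HasFDerivWithinAt f f' S w)
    (hS : Convex ℝ S) (hw : w ∈ S) (hz : z ∈ S) :
    Tendsto (fun t : ℝ => t⁻¹ * (f (w + t • (z - w)) - f w)) (𝓝[>] 0) (𝓝 (f' (z - w))) := by
  refine hf.lim (c := fun t : ℝ => t⁻¹) ?_ ?_ ?_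
  · have : Tendsto (fun t : ℝ => t • (z - w)) (𝓝 0) (𝓝 ((0 : ℝ) • (z - w))) :=
      tendsto_id.smul_const _
    simpa using this.mono_left nhdsWithin_le_nhds
  · filter_upwards [Ioc_mem_nhdsGT one_pos] with t ht
    exact hS.add_smul_sub_mem hw hz ⟨ht.1.le, ht.2⟩
  · refine tendsto_const_nhds.congr' ?_
    filter_upwards [self_mem_nhdsWithin] with t (ht : 0 < t)
    rw [inv_smul_smul₀ ht.ne']

theorem ConvexOn.fderivWithin_le_sub (hf : ConvexOn ℝ S f) (hf' : HasFDerivWithinAt f f' S w)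
    (hw : w ∈ S) (hz : z ∈ S) : f' (z - w) ≤ f z - f w := by
  refine le_of_tendsto (hf'.tendsto_slope_segment hf.1 hw hz) ?_
  filter_upwards [Ioc_mem_nhdsGT one_pos] with t ht
  rw [inv_mul_le_iff₀ ht.1]
  linarith [hf.apply_add_smul_sub_le hw hz ⟨ht.1.le, ht.2⟩]

theorem IsMinOn.sub_le_fderivWithin (hmin : IsMinOn (fun y => f y + g y) S w)
    (hg : ConvexOn ℝ S g) (hf : HasFDerivWithinAt f f' S w) (hw : w ∈ S) (hz : z ∈ S) :
    g w - g z ≤ f' (z - w) := by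
  refine ge_of_tendsto (hf.tendsto_slope_segment hg.1 hw hz) ?_
  filter_upwards [Ioc_mem_nhdsGT one_pos] with t ht
  rw [le_inv_mul_iff₀ ht.1]
  have hp := hmin (hg.1.add_smul_sub_mem hw hz ⟨ht.1.le, ht.2⟩)
  linarith [hg.apply_add_smul_sub_le hw hz ⟨ht.1.le, ht.2⟩, hp.out]

end FirstOrder

section BlockDescent

variable {B₁ B₂ : Type*} [NormedAddCommGroup B₁] [NormedSpace ℝ B₁]
  [NormedAddCommGroup B₂] [NormedSpace ℝ B₂] {f : B₁ × B₂ → ℝ} {Df : B₁ × B₂ → (B₁ × B₂) →L[ℝ] ℝ}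
  {g₁ : B₁ → ℝ} {g₂ : B₂ → ℝ} {S₁ : Set B₁} {S₂ : Set B₂} {L₁ L₂ : ℝ} {x y : B₁ × B₂}

theorem objFun_fst_le (hg₂ : ConvexOn ℝ S₂ g₂)
    (hf : ConvexOn ℝ (S₁ ×ˢ S₂) f)
    (hDf : ∀ x ∈ S₁ ×ˢ S₂, HasFDerivWithinAt f (Df x) (S₁ ×ˢ S₂) x)
    (hdesc : ∀ x₁ ∈ S₁, ∀ x₂ ∈ S₂, ∀ h₁ : B₁, x₁ + h₁ ∈ S₁ →
      f (x₁ + h₁, x₂) ≤ f (x₁, x₂) + Df (x₁, x₂) (h₁, 0) + L₁ / 2 * ‖h₁‖ ^ 2)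
    (hx : x ∈ S₁ ×ˢ S₂) (hy : y ∈ S₁ ×ˢ S₂)
    (hopt : ∀ y₂ ∈ S₂, objFun f g₁ g₂ x ≤ objFun f g₁ g₂ (x.1, y₂)) :
    objFun f g₁ g₂ (y.1, x.2) ≤ objFun f g₁ g₂ y + L₁ / 2 * ‖y.1 - x.1‖ ^ 2 := by
  have hslice : HasFDerivWithinAt (fun y₂ => f (x.1, y₂))
      ((Df x).comp (ContinuousLinearMap.inr ℝ B₁ B₂)) S₂ x.2 :=
    (hDf x hx).comp x.2 (hasFDerivAt_prodMk_right x.1 x.2).hasFDerivWithinAt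
      fun _ hy₂ => mk_mem_prod hx.1 hy₂
  have hmin : IsMinOn (fun y₂ => f (x.1, y₂) + g₂ y₂) S₂ x.2 := isMinOn_iff.2 fun y₂ hy₂ => by
    have := hopt y₂ hy₂
    simp only [objFun] at this
    linarith
  have hopt₂ : g₂ x.2 - g₂ y.2 ≤ Df x (0, y.2 - x.2) :=
    hmin.sub_le_fderivWithin hg₂ hslice hx.2 hy.2
  have hgrad : Df x (y - x) ≤ f y - f x := hf.fderivWithin_le_sub (hDf x hx) hx hy
  have hsplit : Df x (y.1 - x.1, 0) = Df x (y - x) - Df x (0, y.2 - x.2) := by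
    rw [← map_sub]; congr 1; ext <;> simp
  have hstep := hdesc x.1 hx.1 x.2 hx.2 (y.1 - x.1) (by simpa using hy.1)
  rw [add_sub_cancel] at hstep
  simp only [objFun]
  linarith

theorem objFun_snd_le (hg₁ : ConvexOn ℝ S₁ g₁) (hf : ConvexOn ℝ (S₁ ×ˢ S₂) f)
    (hDf : ∀ x ∈ S₁ ×ˢ S₂, HasFDerivWithinAt f (Df x) (S₁ ×ˢ S₂) x)
    (hdesc : ∀ x₁ ∈ S₁, ∀ x₂ ∈ S₂, ∀ h₂ : B₂, x₂ + h₂ ∈ S₂ →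
      f (x₁, x₂ + h₂) ≤ f (x₁, x₂) + Df (x₁, x₂) (0, h₂) + L₂ / 2 * ‖h₂‖ ^ 2)
    (hx : x ∈ S₁ ×ˢ S₂) (hy : y ∈ S₁ ×ˢ S₂)
    (hopt : ∀ y₁ ∈ S₁, objFun f g₁ g₂ x ≤ objFun f g₁ g₂ (y₁, x.2)) :
    objFun f g₁ g₂ (x.1, y.2) ≤ objFun f g₁ g₂ y + L₂ / 2 * ‖y.2 - x.2‖ ^ 2 := by
  have hslice : HasFDerivWithinAt (fun y₁ => f (y₁, x.2))
      ((Df x).comp (ContinuousLinearMap.inl ℝ B₁ B₂)) S₁ x.1 :=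
    (hDf x hx).comp x.1 (hasFDerivAt_prodMk_left x.1 x.2).hasFDerivWithinAt
      fun _ hy₁ => mk_mem_prod hy₁ hx.2
  have hmin : IsMinOn (fun y₁ => f (y₁, x.2) + g₁ y₁) S₁ x.1 := isMinOn_iff.2 fun y₁ hy₁ => by
    have := hopt y₁ hy₁
    simp only [objFun] at this
    linarith
  have hopt₁ : g₁ x.1 - g₁ y.1 ≤ Df x (y.1 - x.1, 0) :=
    hmin.sub_le_fderivWithin hg₁ hslice hx.1 hy.1
  have hgrad : Df x (y - x) ≤ f y - f x := hf.fderivWithin_le_sub (hDf x hx) hx hy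
  have hsplit : Df x (0, y.2 - x.2) = Df x (y - x) - Df x (y.1 - x.1, 0) := by
    rw [← map_sub]; congr 1; ext <;> simp
  have hstep := hdesc x.1 hx.1 x.2 hx.2 (y.2 - x.2) (by simpa using hy.2)
  rw [add_sub_cancel] at hstep
  simp only [objFun]
  linarith

theorem div_two_mul_sq_le {L β a b : ℝ} (hL : 0 ≤ L) (hβ : 0 < β) (h : β * a ^ 2 ≤ b ^ 2) :
    L / 2 * a ^ 2 ≤ L / β / 2 * b ^ 2 := calc
  L / 2 * a ^ 2 = L / β / 2 * (β * a ^ 2) := by field_simp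
  _ ≤ L / β / 2 * b ^ 2 := by gcongr

theorem objFun_step_le {N : B₁ × B₂ → ℝ} {β₁ β₂ : ℝ} {x' : B₁ × B₂}
    (hg₁ : ConvexOn ℝ S₁ g₁) (hg₂ : ConvexOn ℝ S₂ g₂) (hf : ConvexOn ℝ (S₁ ×ˢ S₂) f)
    (hDf : ∀ x ∈ S₁ ×ˢ S₂, HasFDerivWithinAt f (Df x) (S₁ ×ˢ S₂) x)
    (hβ₁ : 0 < β₁) (hβ₂ : 0 < β₂)
    (hN₁ : ∀ z : B₁ × B₂, β₁ * ‖z.1‖ ^ 2 ≤ N z ^ 2)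
    (hN₂ : ∀ z : B₁ × B₂, β₂ * ‖z.2‖ ^ 2 ≤ N z ^ 2)
    (hL₁ : 0 ≤ L₁) (hL₂ : 0 ≤ L₂)
    (hdesc₁ : ∀ x₁ ∈ S₁, ∀ x₂ ∈ S₂, ∀ h₁ : B₁, x₁ + h₁ ∈ S₁ →
      f (x₁ + h₁, x₂) ≤ f (x₁, x₂) + Df (x₁, x₂) (h₁, 0) + L₁ / 2 * ‖h₁‖ ^ 2)
    (hdesc₂ : ∀ x₁ ∈ S₁, ∀ x₂ ∈ S₂, ∀ h₂ : B₂, x₂ + h₂ ∈ S₂ →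
      f (x₁, x₂ + h₂) ≤ f (x₁, x₂) + Df (x₁, x₂) (0, h₂) + L₂ / 2 * ‖h₂‖ ^ 2)
    (hx : x ∈ S₁ ×ˢ S₂) (hy : y ∈ S₁ ×ˢ S₂)
    (hopt : ∀ y₂ ∈ S₂, objFun f g₁ g₂ x ≤ objFun f g₁ g₂ (x.1, y₂))
    (hx'₁ : x'.1 ∈ S₁)
    (hopt₁ : ∀ y₁ ∈ S₁, objFun f g₁ g₂ (x'.1, x.2) ≤ objFun f g₁ g₂ (y₁, x.2))
    (hopt₂ : ∀ y₂ ∈ S₂, objFun f g₁ g₂ x' ≤ objFun f g₁ g₂ (x'.1, y₂)) :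
    objFun f g₁ g₂ x' ≤ objFun f g₁ g₂ y + min (L₁ / β₁) (L₂ / β₂) / 2 * N (x - y) ^ 2 := by
  rcases le_total (L₁ / β₁) (L₂ / β₂) with hmin | hmin
  · have hN := div_two_mul_sq_le (a := ‖y.1 - x.1‖) hL₁ hβ₁
      (by rw [norm_sub_rev]; exact hN₁ (x - y))
    calc objFun f g₁ g₂ x' ≤ objFun f g₁ g₂ (x'.1, x.2) := hopt₂ _ hx.2
      _ ≤ objFun f g₁ g₂ (y.1, x.2) := hopt₁ _ hy.1
      _ ≤ objFun f g₁ g₂ y + L₁ / 2 * ‖y.1 - x.1‖ ^ 2 := objFun_fst_le hg₂ hf hDf hdesc₁ hx hy hopt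
      _ ≤ _ := by rw [min_eq_left hmin]; linarith
  · have hN := div_two_mul_sq_le (a := ‖y.2 - x.2‖) hL₂ hβ₂
      (by rw [norm_sub_rev]; exact hN₂ (x - y))
    calc objFun f g₁ g₂ x' ≤ objFun f g₁ g₂ (x'.1, y.2) := hopt₂ _ hy.2
      _ ≤ objFun f g₁ g₂ y + L₂ / 2 * ‖y.2 - x.2‖ ^ 2 :=
        objFun_snd_le (x := (x'.1, x.2)) hg₁ hf hDf hdesc₂ (mk_mem_prod hx'₁ hx.2) hy hopt₁
      _ ≤ _ := by rw [min_eq_right hmin]; linarith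

end BlockDescent

theorem two_le_ceil_logb_two {r : ℝ} (hr : 2 < r) : 2 ≤ ⌈Real.logb 2 r⌉ := by
  have h : ((1 : ℤ) : ℝ) < Real.logb 2 r := by
    rw [Int.cast_one, Real.lt_logb_iff_rpow_lt one_lt_two (by linarith), Real.rpow_one]
    exact hr
  exact Int.lt_ceil.2 h

theorem initial_phase_of_succ_le {a : ℕ → ℝ} {c R : ℝ} (hcR : 0 < c * R ^ 2)
    (ha : ∀ k, a (k + 1) ≤ c * R ^ 2 / 2) :
    (∀ k, 2 * c * R ^ 2 < a k → a k ≤ (1 / 2 : ℝ) ^ k * a 0) ∧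
    ∃ m : ℕ, (∀ j < m, 2 * c * R ^ 2 < a j) ∧ a m ≤ 2 * c * R ^ 2 ∧
      (m : ℤ) ≤ max 0 (-1 + ⌈Real.logb 2 (a 0 / (c * R ^ 2))⌉) := by
  refine ⟨fun k hk => ?_, ?_⟩
  · cases k with
    | zero => simp
    | succ k => linarith [ha k]
  by_cases h0 : a 0 ≤ 2 * c * R ^ 2
  · exact ⟨0, nofun, h0, le_max_left _ _⟩
  refine ⟨1, fun j hj => by rwa [Nat.lt_one_iff.1 hj, ← not_le], by linarith [ha 0], ?_⟩
  have hlog := two_le_ceil_logb_two ((lt_div_iff₀ hcR).2 (by linarith : 2 * (c * R ^ 2) < a 0))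
  omega

theorem stmt13_general
    {B₁ B₂ : Type*}
    [NormedAddCommGroup B₁] [NormedSpace ℝ B₁]
    [NormedAddCommGroup B₂] [NormedSpace ℝ B₂]
    (f : B₁ × B₂ → ℝ) (Df : B₁ × B₂ → (B₁ × B₂) →L[ℝ] ℝ)
    (g₁ : B₁ → ℝ) (g₂ : B₂ → ℝ) (S₁ : Set B₁) (S₂ : Set B₂)
    -- (P3): g₁, g₂ proper convex, subdifferentiable on their domains
    (hg₁conv : ConvexOn ℝ S₁ g₁) (hg₂conv : ConvexOn ℝ S₂ g₂)
    -- (P4): f convex and Fréchet differentiable on dom g₁ × dom g₂, with derivative Df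
    (hfconv : ConvexOn ℝ (S₁ ×ˢ S₂) f)
    (hfdiff : ∀ x ∈ S₁ ×ˢ S₂, HasFDerivWithinAt f (Df x) (S₁ ×ˢ S₂) x)
    -- (P2): a norm `N` on the product space and the constants β₁, β₂
    (N : B₁ × B₂ → ℝ) (β₁ β₂ : ℝ) (hβ₁ : 0 < β₁) (hβ₂ : 0 < β₂)
    (hNnonneg : ∀ z : B₁ × B₂, 0 ≤ N z)
    (hN₁ : ∀ z : B₁ × B₂, β₁ * ‖z.1‖ ^ 2 ≤ N z ^ 2)
    (hN₂ : ∀ z : B₁ × B₂, β₂ * ‖z.2‖ ^ 2 ≤ N z ^ 2)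
    -- (P5): block Lipschitz continuity of the partial derivatives, with finite
    -- constants L₁, L₂ > 0, together with the (equivalent) block descent inequalities
    (L₁ L₂ : ℝ) (hL₁pos : 0 < L₁) (hL₂pos : 0 < L₂)
    (hdesc₁ : ∀ x₁ ∈ S₁, ∀ x₂ ∈ S₂, ∀ h₁ : B₁, x₁ + h₁ ∈ S₁ →
      f (x₁ + h₁, x₂) ≤ f (x₁, x₂) + Df (x₁, x₂) (h₁, 0) + L₁ / 2 * ‖h₁‖ ^ 2)
    (hdesc₂ : ∀ x₁ ∈ S₁, ∀ x₂ ∈ S₂, ∀ h₂ : B₂, x₂ + h₂ ∈ S₂ →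
      f (x₁, x₂ + h₂) ≤ f (x₁, x₂) + Df (x₁, x₂) (0, h₂) + L₂ / 2 * ‖h₂‖ ^ 2)
    -- (P6): nonempty optimal set X with optimal value H*
    (X : Set (B₁ × B₂))
    (hX : X = {y ∈ S₁ ×ˢ S₂ | ∀ z ∈ S₁ ×ˢ S₂, objFun f g₁ g₂ y ≤ objFun f g₁ g₂ z})
    (hXne : X.Nonempty)
    (Hstar : ℝ) (hHstar : ∀ y ∈ X, objFun f g₁ g₂ y = Hstar)
    -- the alternating minimization sequence
    (x : ℕ → B₁ × B₂)
    (hx0 : x 0 ∈ S₁ ×ˢ S₂)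
    (hinit : ∀ y₂ ∈ S₂, objFun f g₁ g₂ (x 0) ≤ objFun f g₁ g₂ ((x 0).1, y₂))
    (hstep1 : ∀ k : ℕ, (x (k + 1)).1 ∈ S₁ ∧ ∀ y₁ ∈ S₁,
      objFun f g₁ g₂ ((x (k + 1)).1, (x k).2) ≤ objFun f g₁ g₂ (y₁, (x k).2))
    (hstep2 : ∀ k : ℕ, (x (k + 1)).2 ∈ S₂ ∧ ∀ y₂ ∈ S₂,
      objFun f g₁ g₂ (x (k + 1)) ≤ objFun f g₁ g₂ ((x (k + 1)).1, y₂))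
    -- compactness of the level set of H at x⁰ and its diameter R relative to X
    (R : ℝ) (hRpos : 0 < R)
    (hR : ∀ z ∈ S₁ ×ˢ S₂, objFun f g₁ g₂ z ≤ objFun f g₁ g₂ (x 0) →
      ∀ y ∈ X, N (z - y) ≤ R)
    -- the index shift m* and the constant p*
    (mstar : ℤ)
    (hmstar : mstar = max 0 (-1 +
      ⌈Real.logb 2 ((objFun f g₁ g₂ (x 0) - Hstar) / (min (L₁ / β₁) (L₂ / β₂) * R ^ 2))⌉))
    :
    (∀ k : ℕ,
      2 * min (L₁ / β₁) (L₂ / β₂) * R ^ 2 < objFun f g₁ g₂ (x k) - Hstar →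
        objFun f g₁ g₂ (x k) - Hstar ≤
          (1 / 2 : ℝ) ^ k * (objFun f g₁ g₂ (x 0) - Hstar)) ∧
    (∃ m : ℕ,
      (∀ j < m, 2 * min (L₁ / β₁) (L₂ / β₂) * R ^ 2 < objFun f g₁ g₂ (x j) - Hstar) ∧
      objFun f g₁ g₂ (x m) - Hstar ≤ 2 * min (L₁ / β₁) (L₂ / β₂) * R ^ 2 ∧
      (m : ℤ) ≤ mstar) := by
  obtain ⟨xs, hxs⟩ := hXne
  have hxsS : xs ∈ S₁ ×ˢ S₂ := by rw [hX] at hxs; exact hxs.1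
  have hmem : ∀ k, x k ∈ S₁ ×ˢ S₂
    | 0 => hx0
    | k + 1 => mk_mem_prod (hstep1 k).1 (hstep2 k).1
  have hopt : ∀ k, ∀ y₂ ∈ S₂, objFun f g₁ g₂ (x k) ≤ objFun f g₁ g₂ ((x k).1, y₂)
    | 0 => hinit
    | k + 1 => (hstep2 k).2
  have hanti : Antitone fun k => objFun f g₁ g₂ (x k) := antitone_nat_of_succ_le fun k =>
    ((hstep2 k).2 _ (hmem k).2).trans ((hstep1 k).2 _ (hmem k).1)
  set c := min (L₁ / β₁) (L₂ / β₂) with hc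
  have hcR : 0 < c * R ^ 2 := by
    have : 0 < c := lt_min (div_pos hL₁pos hβ₁) (div_pos hL₂pos hβ₂)
    positivity
  have hgap : ∀ k, objFun f g₁ g₂ (x (k + 1)) - Hstar ≤ c * R ^ 2 / 2 := fun k => by
    have hNR : N (x k - xs) ^ 2 ≤ R ^ 2 :=
      pow_le_pow_left₀ (hNnonneg _) (hR _ (hmem k) (hanti k.zero_le) xs hxs) 2
    have hstep := objFun_step_le hg₁conv hg₂conv hfconv hfdiff hβ₁ hβ₂ hN₁ hN₂ hL₁pos.le
      hL₂pos.le hdesc₁ hdesc₂ (hmem k) hxsS (hopt k) (hstep1 k).1 (hstep1 k).2 (hstep2 k).2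
    rw [hHstar xs hxs, ← hc] at hstep
    have hcN : c / 2 * N (x k - xs) ^ 2 ≤ c / 2 * R ^ 2 := by gcongr
    linarith
  subst hmstar
  exact initial_phase_of_succ_le (a := fun k => objFun f g₁ g₂ (x k) - Hstar) hcR hgap

/-- initial linear decrease phase in the plain convex case:
for every `k ≥ 0`, if `H^k - H* > 2 min{L₁/β₁, L₂/β₂} R²` then
`H^k - H* ≤ (1/2)^k (H⁰ - H*)`; consequently the minimal index `m` with
`H^m - H* ≤ 2 min{L₁/β₁, L₂/β₂} R²` exists and satisfies
`m ≤ m* = max{0, -1 + ⌈log₂((H⁰ - H*)/(min{L₁/β₁, L₂/β₂} R²))⌉}`. -/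
theorem stmt13
    {B₁ B₂ : Type*}
    [NormedAddCommGroup B₁] [NormedSpace ℝ B₁] [CompleteSpace B₁]
    [NormedAddCommGroup B₂] [NormedSpace ℝ B₂] [CompleteSpace B₂]
    (f : B₁ × B₂ → ℝ) (Df : B₁ × B₂ → (B₁ × B₂) →L[ℝ] ℝ)
    (g₁ : B₁ → ℝ) (g₂ : B₂ → ℝ) (S₁ : Set B₁) (S₂ : Set B₂)
    -- (P3): g₁, g₂ proper convex, subdifferentiable on their domains
    (hS₁c : Convex ℝ S₁) (hS₂c : Convex ℝ S₂)
    (hS₁ne : S₁.Nonempty) (hS₂ne : S₂.Nonempty)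
    (hg₁conv : ConvexOn ℝ S₁ g₁) (hg₂conv : ConvexOn ℝ S₂ g₂)
    (hg₁sub : ∀ x₁ ∈ S₁, ∃ d : B₁ →L[ℝ] ℝ, ∀ y₁ ∈ S₁, g₁ x₁ + d (y₁ - x₁) ≤ g₁ y₁)
    (hg₂sub : ∀ x₂ ∈ S₂, ∃ d : B₂ →L[ℝ] ℝ, ∀ y₂ ∈ S₂, g₂ x₂ + d (y₂ - x₂) ≤ g₂ y₂)
    -- (P4): f convex and Fréchet differentiable on dom g₁ × dom g₂, with derivative Df
    (hfconv : ConvexOn ℝ (S₁ ×ˢ S₂) f)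
    (hfdiff : ∀ x ∈ S₁ ×ˢ S₂, HasFDerivWithinAt f (Df x) (S₁ ×ˢ S₂) x)
    -- (P2): a norm `N` on the product space and the constants β₁, β₂
    (N : B₁ × B₂ → ℝ) (β₁ β₂ : ℝ) (hβ₁ : 0 < β₁) (hβ₂ : 0 < β₂)
    (hNnonneg : ∀ z : B₁ × B₂, 0 ≤ N z)
    (hN₁ : ∀ z : B₁ × B₂, β₁ * ‖z.1‖ ^ 2 ≤ N z ^ 2)
    (hN₂ : ∀ z : B₁ × B₂, β₂ * ‖z.2‖ ^ 2 ≤ N z ^ 2)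
    -- (P5): block Lipschitz continuity of the partial derivatives, with finite
    -- constants L₁, L₂ > 0, together with the (equivalent) block descent inequalities
    (L₁ L₂ : ℝ) (hL₁pos : 0 < L₁) (hL₂pos : 0 < L₂)
    (hlip₁ : ∀ x₁ ∈ S₁, ∀ x₂ ∈ S₂, ∀ h₁ : B₁, x₁ + h₁ ∈ S₁ →
      ‖(Df (x₁ + h₁, x₂)).comp (ContinuousLinearMap.inl ℝ B₁ B₂) -
        (Df (x₁, x₂)).comp (ContinuousLinearMap.inl ℝ B₁ B₂)‖ ≤ L₁ * ‖h₁‖)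
    (hlip₂ : ∀ x₁ ∈ S₁, ∀ x₂ ∈ S₂, ∀ h₂ : B₂, x₂ + h₂ ∈ S₂ →
      ‖(Df (x₁, x₂ + h₂)).comp (ContinuousLinearMap.inr ℝ B₁ B₂) -
        (Df (x₁, x₂)).comp (ContinuousLinearMap.inr ℝ B₁ B₂)‖ ≤ L₂ * ‖h₂‖)
    (hdesc₁ : ∀ x₁ ∈ S₁, ∀ x₂ ∈ S₂, ∀ h₁ : B₁, x₁ + h₁ ∈ S₁ →
      f (x₁ + h₁, x₂) ≤ f (x₁, x₂) + Df (x₁, x₂) (h₁, 0) + L₁ / 2 * ‖h₁‖ ^ 2)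
    (hdesc₂ : ∀ x₁ ∈ S₁, ∀ x₂ ∈ S₂, ∀ h₂ : B₂, x₂ + h₂ ∈ S₂ →
      f (x₁, x₂ + h₂) ≤ f (x₁, x₂) + Df (x₁, x₂) (0, h₂) + L₂ / 2 * ‖h₂‖ ^ 2)
    -- (P6): nonempty optimal set X with optimal value H*
    (X : Set (B₁ × B₂))
    (hX : X = {y ∈ S₁ ×ˢ S₂ | ∀ z ∈ S₁ ×ˢ S₂, objFun f g₁ g₂ y ≤ objFun f g₁ g₂ z})
    (hXne : X.Nonempty)
    (Hstar : ℝ) (hHstar : ∀ y ∈ X, objFun f g₁ g₂ y = Hstar)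
    -- projections onto X with respect to N
    (proj : B₁ × B₂ → B₁ × B₂)
    (hproj : ∀ z ∈ S₁ ×ˢ S₂, proj z ∈ X ∧ ∀ y ∈ X, N (z - proj z) ≤ N (z - y))
    -- (P8c): g₁, g₂ closed (lower semicontinuous), compact level set, diameter R
    (hg₁lsc : LowerSemicontinuousOn g₁ S₁) (hg₂lsc : LowerSemicontinuousOn g₂ S₂)
    (hS₁cl : IsClosed S₁) (hS₂cl : IsClosed S₂)
    -- the alternating minimization sequence
    (x : ℕ → B₁ × B₂)
    (hx0 : x 0 ∈ S₁ ×ˢ S₂)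
    (hinit : ∀ y₂ ∈ S₂, objFun f g₁ g₂ (x 0) ≤ objFun f g₁ g₂ ((x 0).1, y₂))
    (hstep1 : ∀ k : ℕ, (x (k + 1)).1 ∈ S₁ ∧ ∀ y₁ ∈ S₁,
      objFun f g₁ g₂ ((x (k + 1)).1, (x k).2) ≤ objFun f g₁ g₂ (y₁, (x k).2))
    (hstep2 : ∀ k : ℕ, (x (k + 1)).2 ∈ S₂ ∧ ∀ y₂ ∈ S₂,
      objFun f g₁ g₂ (x (k + 1)) ≤ objFun f g₁ g₂ ((x (k + 1)).1, y₂))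
    -- compactness of the level set of H at x⁰ and its diameter R relative to X
    (hcomp : IsCompact {z ∈ S₁ ×ˢ S₂ | objFun f g₁ g₂ z ≤ objFun f g₁ g₂ (x 0)})
    (R : ℝ) (hRpos : 0 < R)
    (hR : ∀ z ∈ S₁ ×ˢ S₂, objFun f g₁ g₂ z ≤ objFun f g₁ g₂ (x 0) →
      ∀ y ∈ X, N (z - y) ≤ R)
    (hH0 : Hstar < objFun f g₁ g₂ (x 0))
    -- the index shift m* and the constant p*
    (mstar : ℤ)
    (hmstar : mstar = max 0 (-1 +
      ⌈Real.logb 2 ((objFun f g₁ g₂ (x 0) - Hstar) / (min (L₁ / β₁) (L₂ / β₂) * R ^ 2))⌉))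
    :
    (∀ k : ℕ,
      2 * min (L₁ / β₁) (L₂ / β₂) * R ^ 2 < objFun f g₁ g₂ (x k) - Hstar →
        objFun f g₁ g₂ (x k) - Hstar ≤
          (1 / 2 : ℝ) ^ k * (objFun f g₁ g₂ (x 0) - Hstar)) ∧
    (∃ m : ℕ,
      (∀ j < m, 2 * min (L₁ / β₁) (L₂ / β₂) * R ^ 2 < objFun f g₁ g₂ (x j) - Hstar) ∧
      objFun f g₁ g₂ (x m) - Hstar ≤ 2 * min (L₁ / β₁) (L₂ / β₂) * R ^ 2 ∧
      (m : ℤ) ≤ mstar) :=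
  stmt13_general f Df g₁ g₂ S₁ S₂ hg₁conv hg₂conv hfconv hfdiff N β₁ β₂ hβ₁ hβ₂ hNnonneg hN₁ hN₂ L₁
    L₂ hL₁pos hL₂pos hdesc₁ hdesc₂ X hX hXne Hstar hHstar x hx0 hinit hstep1 hstep2 R hRpos hR mstar
    hmstar
end

section
/- For all k ≥ 0 the alternating minimization iterates satisfy H^k − H* ≤ 2((1/L₁) + (1/L₂))^{-1} R² / ( k + 2R²((1/L₁) + (1/L₂))^{-1} (H⁰ − H*)^{-1} ); in particular, for all k ≥ 1, H^k − H* ≤ 2((1/L₁) + (1/L₂))^{-1} R² / k. -/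
/-!
Right after a block has been minimized exactly, the partial derivative of `f` in that block
vanishes. So at the start of each half-step the whole derivative is the partial derivative `∂ᵢ f`
of the block about to be minimized, and convexity bounds the optimality gap by `‖∂ᵢ f‖ * R`.
Comparing with a partial gradient step of length `1 / Lᵢ` (block descent lemma), exact
minimization in block `i` decreases `f` by at least `‖∂ᵢ f‖ ^ 2 / (2 * Lᵢ)`. Together these give
`1 / gap_after ≥ 1 / gap_before + 1 / (2 * Lᵢ * R ^ 2)`; summing over both half-steps of the
first `k` sweeps gives `1 / (H^k - H*) ≥ 1 / (H⁰ - H*) + k * (1 / L₁ + 1 / L₂) / (2 * R ^ 2)`.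
-/

open Set ContinuousLinearMap

theorem inv_add_inv_le_inv_of_le_mul_of_le_sub_sq {a b G L R : ℝ} (hb : 0 < b) (hL : 0 < L)
    (haG : a ≤ G * R) (hba : b ≤ a - G ^ 2 / (2 * L)) : a⁻¹ + (2 * L * R ^ 2)⁻¹ ≤ b⁻¹ := by
  have hG : G ^ 2 ≤ 2 * L * (a - b) := by
    rw [le_sub_iff_add_le, ← le_sub_iff_add_le', div_le_iff₀ (by positivity)] at hba
    linarith
  have ha : 0 < a := hb.trans_le (hba.trans (sub_le_self _ (by positivity)))
  have hR : R ≠ 0 := by rintro rfl; linarith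
  have hab : a * b ≤ 2 * L * R ^ 2 * (a - b) :=
    calc a * b ≤ a ^ 2 := by nlinarith
      _ ≤ (G * R) ^ 2 := pow_le_pow_left₀ ha.le haG 2
      _ ≤ 2 * L * R ^ 2 * (a - b) := by rw [mul_pow]; nlinarith [sq_nonneg R]
  have hkey : (2 * L * R ^ 2)⁻¹ ≤ (a - b) / (a * b) := by
    rw [inv_eq_one_div, div_le_div_iff₀ (by positivity) (by positivity)]
    linarith
  have hinv : b⁻¹ = a⁻¹ + (a - b) / (a * b) := by field_simp; ring
  linarith

theorem inv_add_nat_mul_le_inv {d : ℕ → ℝ} {c : ℝ} (hd : Antitone d)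
    (hstep : ∀ k, 0 < d (k + 1) → (d k)⁻¹ + c ≤ (d (k + 1))⁻¹) :
    ∀ k, 0 < d k → (d 0)⁻¹ + k * c ≤ (d k)⁻¹
  | 0, _ => by simp
  | k + 1, hpos => by
    have := inv_add_nat_mul_le_inv hd hstep k (hpos.trans_le (hd k.le_succ))
    have := hstep k hpos
    push_cast
    linarith

theorem le_inv_inv_add_nat_mul {d : ℕ → ℝ} {c : ℝ} (hc : 0 ≤ c) (hd₀ : 0 < d 0)
    (hnonneg : ∀ k, 0 ≤ d k) (hd : Antitone d)
    (hstep : ∀ k, 0 < d (k + 1) → (d k)⁻¹ + c ≤ (d (k + 1))⁻¹) (k : ℕ) :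
    d k ≤ ((d 0)⁻¹ + k * c)⁻¹ := by
  rcases (hnonneg k).eq_or_lt with hzero | hpos
  · rw [← hzero]; positivity
  · have hc' : 0 < (d 0)⁻¹ + k * c := add_pos_of_pos_of_nonneg (inv_pos.2 hd₀) (by positivity)
    exact (le_inv_comm₀ hpos hc').2 (inv_add_nat_mul_le_inv hd hstep k hpos)

section

variable {E : Type*} [NormedAddCommGroup E] [NormedSpace ℝ E] {f : E → ℝ}

theorem ConvexOn.add_fderiv_sub_le (hconv : ConvexOn ℝ univ f) (hdiff : Differentiable ℝ f)
    (z w : E) : f z + fderiv ℝ f z (w - z) ≤ f w := by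
  have hderiv : HasDerivAt (f ∘ AffineMap.lineMap (k := ℝ) z w) (fderiv ℝ f z (w - z)) 0 := by
    simpa using (hdiff _).hasFDerivAt.comp_hasDerivAt (0 : ℝ) AffineMap.hasDerivAt_lineMap
  have hslope := (hconv.comp_affineMap (AffineMap.lineMap z w)).le_slope_of_hasDerivAt
    (mem_univ 0) (mem_univ 1) zero_lt_one hderiv
  simp only [map_sub, slope_def_field, Function.comp_apply, AffineMap.lineMap_apply_one,
    AffineMap.lineMap_apply_zero, sub_zero, div_one] at hslope
  rw [map_sub]
  linarith

theorem le_add_fderiv_add_sq_norm_of_lipschitz (hdiff : Differentiable ℝ f) {L : ℝ}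
    (hlip : ∀ u h, ‖fderiv ℝ f (u + h) - fderiv ℝ f u‖ ≤ L * ‖h‖) (z h : E) :
    f (z + h) ≤ f z + fderiv ℝ f z h + L / 2 * ‖h‖ ^ 2 := by
  set φ : ℝ → ℝ := fun t => f (z + t • h) - t * fderiv ℝ f z h - L / 2 * ‖h‖ ^ 2 * t ^ 2
  have hφ : ∀ t, HasDerivAt φ (fderiv ℝ f (z + t • h) h - fderiv ℝ f z h - L * ‖h‖ ^ 2 * t) t := by
    intro t
    have hline : HasDerivAt (fun t : ℝ => z + t • h) h t := by
      simpa using ((hasDerivAt_id t).smul_const h).const_add z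
    refine ((((hdiff _).hasFDerivAt.comp_hasDerivAt t hline).sub
      ((hasDerivAt_id t).mul_const (fderiv ℝ f z h))).sub
      ((hasDerivAt_pow 2 t).const_mul (L / 2 * ‖h‖ ^ 2))).congr_deriv ?_
    push_cast
    ring
  have hanti : AntitoneOn φ (Ici 0) := by
    refine antitoneOn_of_hasDerivWithinAt_nonpos (convex_Ici 0)
      (fun t _ => (hφ t).continuousAt.continuousWithinAt) (fun t _ => (hφ t).hasDerivWithinAt) ?_
    intro t ht
    rw [interior_Ici, mem_Ioi] at ht
    have hbound : fderiv ℝ f (z + t • h) h - fderiv ℝ f z h ≤ L * ‖h‖ ^ 2 * t :=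
      calc fderiv ℝ f (z + t • h) h - fderiv ℝ f z h
          = (fderiv ℝ f (z + t • h) - fderiv ℝ f z) h := rfl
        _ ≤ ‖fderiv ℝ f (z + t • h) - fderiv ℝ f z‖ * ‖h‖ := le_of_abs_le
            ((fderiv ℝ f (z + t • h) - fderiv ℝ f z).le_opNorm h)
        _ ≤ L * ‖t • h‖ * ‖h‖ := by gcongr; exact hlip z (t • h)
        _ = L * ‖h‖ ^ 2 * t := by rw [norm_smul, Real.norm_of_nonneg ht.le]; ring
    linarith
  have := hanti self_mem_Ici (mem_Ici.2 zero_le_one) zero_le_one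
  simp only [φ, one_smul, one_mul, one_pow, mul_one, zero_smul, add_zero, zero_mul, sub_zero,
    ne_eq, OfNat.ofNat_ne_zero, not_false_eq_true, zero_pow, mul_zero] at this
  linarith

end

theorem exists_le_sub_sq_norm_fderiv_of_lipschitz {E : Type*} [NormedAddCommGroup E]
    [InnerProductSpace ℝ E] [CompleteSpace E] {f : E → ℝ} (hdiff : Differentiable ℝ f) {L : ℝ}
    (hL : 0 < L) (hlip : ∀ u h, ‖fderiv ℝ f (u + h) - fderiv ℝ f u‖ ≤ L * ‖h‖) (z : E) :
    ∃ z', f z' ≤ f z - ‖fderiv ℝ f z‖ ^ 2 / (2 * L) := by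
  set v := (InnerProductSpace.toDual ℝ E).symm (fderiv ℝ f z)
  have hv : ‖v‖ = ‖fderiv ℝ f z‖ := LinearIsometryEquiv.norm_map _ _
  have hfv : fderiv ℝ f z v = ‖fderiv ℝ f z‖ ^ 2 := by
    rw [← InnerProductSpace.toDual_symm_apply, real_inner_self_eq_norm_sq, hv]
  refine ⟨z + (-L⁻¹) • v, ?_⟩
  have := le_add_fderiv_add_sq_norm_of_lipschitz hdiff hlip z ((-L⁻¹) • v)
  rw [map_smul, hfv, norm_smul, hv, smul_eq_mul] at this
  convert this using 1
  rw [Real.norm_eq_abs, abs_neg, abs_of_pos (inv_pos.2 hL)]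
  field_simp
  ring

section

variable {E F : Type*} [NormedAddCommGroup E] [NormedSpace ℝ E] [NormedAddCommGroup F]
  [NormedSpace ℝ F] {f : E × F → ℝ}

theorem fderiv_comp_prodMk_left (hdiff : Differentiable ℝ f) (u : E) (v : F) :
    fderiv ℝ (fun u => f (u, v)) u = (fderiv ℝ f (u, v)).comp (inl ℝ E F) :=
  ((hdiff _).hasFDerivAt.comp u (hasFDerivAt_prodMk_left u v)).fderiv

theorem fderiv_comp_prodMk_right (hdiff : Differentiable ℝ f) (u : E) (v : F) :
    fderiv ℝ (fun v => f (u, v)) v = (fderiv ℝ f (u, v)).comp (inr ℝ E F) :=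
  ((hdiff _).hasFDerivAt.comp v (hasFDerivAt_prodMk_right u v)).fderiv

theorem fderiv_comp_inl_eq_zero_of_forall_le (hdiff : Differentiable ℝ f) {w : E × F}
    (hmin : ∀ u, f w ≤ f (u, w.2)) : (fderiv ℝ f w).comp (inl ℝ E F) = 0 := by
  rw [← fderiv_comp_prodMk_left hdiff]
  exact IsLocalMin.fderiv_eq_zero (Filter.Eventually.of_forall hmin)

theorem fderiv_comp_inr_eq_zero_of_forall_le (hdiff : Differentiable ℝ f) {w : E × F}
    (hmin : ∀ v, f w ≤ f (w.1, v)) : (fderiv ℝ f w).comp (inr ℝ E F) = 0 := by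
  rw [← fderiv_comp_prodMk_right hdiff]
  exact IsLocalMin.fderiv_eq_zero (Filter.Eventually.of_forall hmin)

theorem ConvexOn.sub_le_norm_fderiv_comp_inl_mul_add (hconv : ConvexOn ℝ univ f)
    (hdiff : Differentiable ℝ f) (w y : E × F) :
    f w - f y ≤ ‖(fderiv ℝ f w).comp (inl ℝ E F)‖ * ‖w.1 - y.1‖ +
      ‖(fderiv ℝ f w).comp (inr ℝ E F)‖ * ‖w.2 - y.2‖ := by
  have hsplit : fderiv ℝ f w (w - y) = (fderiv ℝ f w).comp (inl ℝ E F) (w.1 - y.1) +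
      (fderiv ℝ f w).comp (inr ℝ E F) (w.2 - y.2) := by
    rw [comp_apply, comp_apply, ← map_add, inl_apply, inr_apply, Prod.mk_add_mk, add_zero,
      zero_add]
    rfl
  have hgrad := hconv.add_fderiv_sub_le hdiff w y
  rw [← neg_sub w y, map_neg] at hgrad
  have h₁ := le_of_abs_le (((fderiv ℝ f w).comp (inl ℝ E F)).le_opNorm (w.1 - y.1))
  have h₂ := le_of_abs_le (((fderiv ℝ f w).comp (inr ℝ E F)).le_opNorm (w.2 - y.2))
  linarith

end

theorem exists_fst_le_sub_sq_norm_fderiv_comp_inl {E F : Type*} [NormedAddCommGroup E]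
    [InnerProductSpace ℝ E] [CompleteSpace E] [NormedAddCommGroup F] [NormedSpace ℝ F]
    {f : E × F → ℝ} (hdiff : Differentiable ℝ f) {L : ℝ} (hL : 0 < L)
    (hlip : ∀ (z : E × F) (h : E),
      ‖(fderiv ℝ f (z.1 + h, z.2)).comp (inl ℝ E F) - (fderiv ℝ f z).comp (inl ℝ E F)‖ ≤ L * ‖h‖)
    (w : E × F) : ∃ u, f (u, w.2) ≤ f w - ‖(fderiv ℝ f w).comp (inl ℝ E F)‖ ^ 2 / (2 * L) := by
  have hsection : Differentiable ℝ fun u => f (u, w.2) :=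
    hdiff.comp (differentiable_id.prodMk (differentiable_const _))
  simp_rw [← fderiv_comp_prodMk_left hdiff] at hlip ⊢
  exact exists_le_sub_sq_norm_fderiv_of_lipschitz hsection hL (fun u h => hlip (u, w.2) h) w.1

theorem exists_snd_le_sub_sq_norm_fderiv_comp_inr {E F : Type*} [NormedAddCommGroup E]
    [NormedSpace ℝ E] [NormedAddCommGroup F] [InnerProductSpace ℝ F] [CompleteSpace F]
    {f : E × F → ℝ} (hdiff : Differentiable ℝ f) {L : ℝ} (hL : 0 < L)
    (hlip : ∀ (z : E × F) (h : F),
      ‖(fderiv ℝ f (z.1, z.2 + h)).comp (inr ℝ E F) - (fderiv ℝ f z).comp (inr ℝ E F)‖ ≤ L * ‖h‖)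
    (w : E × F) : ∃ v, f (w.1, v) ≤ f w - ‖(fderiv ℝ f w).comp (inr ℝ E F)‖ ^ 2 / (2 * L) := by
  have hsection : Differentiable ℝ fun v => f (w.1, v) :=
    hdiff.comp ((differentiable_const _).prodMk differentiable_id)
  simp_rw [← fderiv_comp_prodMk_right hdiff] at hlip ⊢
  exact exists_le_sub_sq_norm_fderiv_of_lipschitz hsection hL (fun v h => hlip (w.1, v) h) w.2

theorem inv_sub_add_inv_le_inv_sub_of_fst_step {E F : Type*} [NormedAddCommGroup E]
    [InnerProductSpace ℝ E] [CompleteSpace E] [NormedAddCommGroup F] [NormedSpace ℝ F]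
    {f : E × F → ℝ} (hconv : ConvexOn ℝ univ f) (hdiff : Differentiable ℝ f) {L : ℝ} (hL : 0 < L)
    (hlip : ∀ (z : E × F) (h : E),
      ‖(fderiv ℝ f (z.1 + h, z.2)).comp (inl ℝ E F) - (fderiv ℝ f z).comp (inl ℝ E F)‖ ≤ L * ‖h‖)
    {w y : E × F} {u : E} {R : ℝ} (hw : (fderiv ℝ f w).comp (inr ℝ E F) = 0)
    (hR : ‖w.1 - y.1‖ ≤ R) (hu : ∀ u', f (u, w.2) ≤ f (u', w.2)) (hpos : f y < f (u, w.2)) :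
    (f w - f y)⁻¹ + (2 * L * R ^ 2)⁻¹ ≤ (f (u, w.2) - f y)⁻¹ := by
  obtain ⟨u', hu'⟩ := exists_fst_le_sub_sq_norm_fderiv_comp_inl hdiff hL hlip w
  have hgap := hconv.sub_le_norm_fderiv_comp_inl_mul_add hdiff w y
  rw [hw, norm_zero, zero_mul, add_zero] at hgap
  exact inv_add_inv_le_inv_of_le_mul_of_le_sub_sq (sub_pos.2 hpos) hL
    (hgap.trans (mul_le_mul_of_nonneg_left hR (norm_nonneg _))) (by linarith [hu u'])

theorem inv_sub_add_inv_le_inv_sub_of_snd_step {E F : Type*} [NormedAddCommGroup E]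
    [NormedSpace ℝ E] [NormedAddCommGroup F] [InnerProductSpace ℝ F] [CompleteSpace F]
    {f : E × F → ℝ} (hconv : ConvexOn ℝ univ f) (hdiff : Differentiable ℝ f) {L : ℝ} (hL : 0 < L)
    (hlip : ∀ (z : E × F) (h : F),
      ‖(fderiv ℝ f (z.1, z.2 + h)).comp (inr ℝ E F) - (fderiv ℝ f z).comp (inr ℝ E F)‖ ≤ L * ‖h‖)
    {w y : E × F} {v : F} {R : ℝ} (hw : (fderiv ℝ f w).comp (inl ℝ E F) = 0)
    (hR : ‖w.2 - y.2‖ ≤ R) (hv : ∀ v', f (w.1, v) ≤ f (w.1, v')) (hpos : f y < f (w.1, v)) :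
    (f w - f y)⁻¹ + (2 * L * R ^ 2)⁻¹ ≤ (f (w.1, v) - f y)⁻¹ := by
  obtain ⟨v', hv'⟩ := exists_snd_le_sub_sq_norm_fderiv_comp_inr hdiff hL hlip w
  have hgap := hconv.sub_le_norm_fderiv_comp_inl_mul_add hdiff w y
  rw [hw, norm_zero, zero_mul, zero_add] at hgap
  exact inv_add_inv_le_inv_of_le_mul_of_le_sub_sq (sub_pos.2 hpos) hL
    (hgap.trans (mul_le_mul_of_nonneg_left hR (norm_nonneg _))) (by linarith [hv v'])

theorem inv_sub_add_le_inv_sub_of_sweep {E F : Type*} [NormedAddCommGroup E]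
    [InnerProductSpace ℝ E] [CompleteSpace E] [NormedAddCommGroup F] [InnerProductSpace ℝ F]
    [CompleteSpace F] {f : E × F → ℝ} (hconv : ConvexOn ℝ univ f) (hdiff : Differentiable ℝ f)
    {L₁ L₂ : ℝ} (hL₁ : 0 < L₁) (hL₂ : 0 < L₂)
    (hlip₁ : ∀ (z : E × F) (h : E),
      ‖(fderiv ℝ f (z.1 + h, z.2)).comp (inl ℝ E F) - (fderiv ℝ f z).comp (inl ℝ E F)‖ ≤ L₁ * ‖h‖)
    (hlip₂ : ∀ (z : E × F) (h : F),
      ‖(fderiv ℝ f (z.1, z.2 + h)).comp (inr ℝ E F) - (fderiv ℝ f z).comp (inr ℝ E F)‖ ≤ L₂ * ‖h‖)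
    {w w' y : E × F} {R : ℝ} (hw : (fderiv ℝ f w).comp (inr ℝ E F) = 0)
    (hR₁ : ‖w.1 - y.1‖ ≤ R) (hR₂ : ‖w.2 - y.2‖ ≤ R)
    (hstep₁ : ∀ u, f (w'.1, w.2) ≤ f (u, w.2)) (hstep₂ : ∀ v, f w' ≤ f (w'.1, v))
    (hpos : f y < f w') :
    (f w - f y)⁻¹ + ((2 * L₁ * R ^ 2)⁻¹ + (2 * L₂ * R ^ 2)⁻¹) ≤ (f w' - f y)⁻¹ := by
  have hhalf₁ := inv_sub_add_inv_le_inv_sub_of_fst_step hconv hdiff hL₁ hlip₁ hw hR₁ hstep₁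
    (hpos.trans_le (hstep₂ w.2))
  have hhalf₂ := inv_sub_add_inv_le_inv_sub_of_snd_step hconv hdiff hL₂ hlip₂
    (fderiv_comp_inl_eq_zero_of_forall_le hdiff hstep₁) hR₂ hstep₂ hpos
  linarith

theorem stmt14_general {n m : ℕ}
    (f : EuclideanSpace ℝ (Fin n) × EuclideanSpace ℝ (Fin m) → ℝ)
    (hfconv : ConvexOn ℝ Set.univ f)
    (hfdiff : ContDiff ℝ 1 f)
    -- block Lipschitz continuity of the partial gradients
    (L₁ L₂ : ℝ) (hL₁pos : 0 < L₁) (hL₂pos : 0 < L₂)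
    (hlip₁ : ∀ (z : EuclideanSpace ℝ (Fin n) × EuclideanSpace ℝ (Fin m))
        (h₁ : EuclideanSpace ℝ (Fin n)),
      ‖(fderiv ℝ f (z.1 + h₁, z.2)).comp
          (ContinuousLinearMap.inl ℝ (EuclideanSpace ℝ (Fin n)) (EuclideanSpace ℝ (Fin m))) -
        (fderiv ℝ f z).comp
          (ContinuousLinearMap.inl ℝ (EuclideanSpace ℝ (Fin n)) (EuclideanSpace ℝ (Fin m)))‖
        ≤ L₁ * ‖h₁‖)
    (hlip₂ : ∀ (z : EuclideanSpace ℝ (Fin n) × EuclideanSpace ℝ (Fin m))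
        (h₂ : EuclideanSpace ℝ (Fin m)),
      ‖(fderiv ℝ f (z.1, z.2 + h₂)).comp
          (ContinuousLinearMap.inr ℝ (EuclideanSpace ℝ (Fin n)) (EuclideanSpace ℝ (Fin m))) -
        (fderiv ℝ f z).comp
          (ContinuousLinearMap.inr ℝ (EuclideanSpace ℝ (Fin n)) (EuclideanSpace ℝ (Fin m)))‖
        ≤ L₂ * ‖h₂‖)
    -- nonempty set of minimizers, with minimal value H*
    (Hstar : ℝ) (hHstarle : ∀ z, Hstar ≤ f z) (hHstarex : ∃ z, f z = Hstar)
    -- the alternating minimization sequence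
    (x : ℕ → EuclideanSpace ℝ (Fin n) × EuclideanSpace ℝ (Fin m))
    (hinit : ∀ y₂, f (x 0) ≤ f ((x 0).1, y₂))
    (hstep1 : ∀ (k : ℕ) y₁, f ((x (k + 1)).1, (x k).2) ≤ f (y₁, (x k).2))
    (hstep2 : ∀ (k : ℕ) y₂, f (x (k + 1)) ≤ f ((x (k + 1)).1, y₂))
    (hH0 : Hstar < f (x 0))
    (R : ℝ) (hRpos : 0 < R)
    (hR : ∀ z, f z ≤ f (x 0) → ∀ y, f y = Hstar →
      ‖z.1 - y.1‖ ^ 2 + ‖z.2 - y.2‖ ^ 2 ≤ R ^ 2) :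
    (∀ k : ℕ,
      f (x k) - Hstar ≤
        2 * ((1 / L₁) + (1 / L₂))⁻¹ * R ^ 2 /
          ((k : ℝ) + 2 * R ^ 2 * ((1 / L₁) + (1 / L₂))⁻¹ * (f (x 0) - Hstar)⁻¹)) ∧
    (∀ k : ℕ, 1 ≤ k →
      f (x k) - Hstar ≤ 2 * ((1 / L₁) + (1 / L₂))⁻¹ * R ^ 2 / (k : ℝ)) := by
  have hdiff : Differentiable ℝ f := hfdiff.differentiable one_ne_zero
  obtain ⟨xstar, hxstar⟩ := hHstarex
  have hanti : Antitone fun k => f (x k) - Hstar := antitone_nat_of_succ_le fun k => by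
    linarith [hstep1 k (x k).1, hstep2 k (x k).2]
  have hlevel : ∀ k, f (x k) ≤ f (x 0) := fun k => by linarith [hanti (Nat.zero_le k)]
  have hdist : ∀ z, f z ≤ f (x 0) → ‖z.1 - xstar.1‖ ≤ R ∧ ‖z.2 - xstar.2‖ ≤ R := fun z hz => by
    have := hR z hz xstar hxstar
    exact ⟨le_of_sq_le_sq (by nlinarith [sq_nonneg ‖z.2 - xstar.2‖]) hRpos.le,
      le_of_sq_le_sq (by nlinarith [sq_nonneg ‖z.1 - xstar.1‖]) hRpos.le⟩
  have hpartial₂ : ∀ k, (fderiv ℝ f (x k)).comp (inr ℝ _ _) = 0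
    | 0 => fderiv_comp_inr_eq_zero_of_forall_le hdiff hinit
    | k + 1 => fderiv_comp_inr_eq_zero_of_forall_le hdiff (hstep2 k)
  have hsweep : ∀ k, 0 < f (x (k + 1)) - Hstar → (f (x k) - Hstar)⁻¹ +
      ((2 * L₁ * R ^ 2)⁻¹ + (2 * L₂ * R ^ 2)⁻¹) ≤ (f (x (k + 1)) - Hstar)⁻¹ := fun k hpos => by
    simpa only [hxstar] using inv_sub_add_le_inv_sub_of_sweep hfconv hdiff hL₁pos hL₂pos hlip₁
      hlip₂ (hpartial₂ k) (hdist _ (hlevel k)).1 (hdist _ (hlevel k)).2 (hstep1 k) (hstep2 k)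
      (by linarith)
  have hgap₀ : 0 < f (x 0) - Hstar := sub_pos.2 hH0
  have hrate : ∀ k : ℕ, f (x k) - Hstar ≤ 2 * ((1 / L₁) + (1 / L₂))⁻¹ * R ^ 2 /
      ((k : ℝ) + 2 * R ^ 2 * ((1 / L₁) + (1 / L₂))⁻¹ * (f (x 0) - Hstar)⁻¹) := fun k => by
    refine (le_inv_inv_add_nat_mul (by positivity) hgap₀ (fun k => sub_nonneg.2 (hHstarle _))
      hanti hsweep k).trans_eq ?_
    field_simp
    ring
  refine ⟨hrate, fun k hk => (hrate k).trans (div_le_div_of_nonneg_left (by positivity)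
    (by exact_mod_cast hk) (le_add_of_nonneg_right (by positivity)))⟩

/-- improved sublinear convergence of alternating minimization for
smooth convex optimization in Euclidean spaces: for all `k ≥ 0`,
`H^k - H* ≤ 2((1/L₁)+(1/L₂))⁻¹ R² / (k + 2R²((1/L₁)+(1/L₂))⁻¹ (H⁰ - H*)⁻¹)`, and in
particular `H^k - H* ≤ 2((1/L₁)+(1/L₂))⁻¹ R² / k` for all `k ≥ 1`. Here `g₁ ≡ g₂ ≡ 0`,
so `H = f`, and the product space carries the Euclidean norm
`‖(x₁,x₂)‖² = ‖x₁‖² + ‖x₂‖²`. -/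
theorem stmt14 {n m : ℕ}
    (f : EuclideanSpace ℝ (Fin n) × EuclideanSpace ℝ (Fin m) → ℝ)
    (hfconv : ConvexOn ℝ Set.univ f)
    (hfdiff : ContDiff ℝ 1 f)
    -- block Lipschitz continuity of the partial gradients
    (L₁ L₂ : ℝ) (hL₁pos : 0 < L₁) (hL₂pos : 0 < L₂)
    (hlip₁ : ∀ (z : EuclideanSpace ℝ (Fin n) × EuclideanSpace ℝ (Fin m))
        (h₁ : EuclideanSpace ℝ (Fin n)),
      ‖(fderiv ℝ f (z.1 + h₁, z.2)).comp
          (ContinuousLinearMap.inl ℝ (EuclideanSpace ℝ (Fin n)) (EuclideanSpace ℝ (Fin m))) -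
        (fderiv ℝ f z).comp
          (ContinuousLinearMap.inl ℝ (EuclideanSpace ℝ (Fin n)) (EuclideanSpace ℝ (Fin m)))‖
        ≤ L₁ * ‖h₁‖)
    (hlip₂ : ∀ (z : EuclideanSpace ℝ (Fin n) × EuclideanSpace ℝ (Fin m))
        (h₂ : EuclideanSpace ℝ (Fin m)),
      ‖(fderiv ℝ f (z.1, z.2 + h₂)).comp
          (ContinuousLinearMap.inr ℝ (EuclideanSpace ℝ (Fin n)) (EuclideanSpace ℝ (Fin m))) -
        (fderiv ℝ f z).comp
          (ContinuousLinearMap.inr ℝ (EuclideanSpace ℝ (Fin n)) (EuclideanSpace ℝ (Fin m)))‖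
        ≤ L₂ * ‖h₂‖)
    -- nonempty set of minimizers, with minimal value H*
    (Hstar : ℝ) (hHstarle : ∀ z, Hstar ≤ f z) (hHstarex : ∃ z, f z = Hstar)
    -- the alternating minimization sequence
    (x : ℕ → EuclideanSpace ℝ (Fin n) × EuclideanSpace ℝ (Fin m))
    (hinit : ∀ y₂, f (x 0) ≤ f ((x 0).1, y₂))
    (hstep1 : ∀ (k : ℕ) y₁, f ((x (k + 1)).1, (x k).2) ≤ f (y₁, (x k).2))
    (hstep2 : ∀ (k : ℕ) y₂, f (x (k + 1)) ≤ f ((x (k + 1)).1, y₂))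
    (hH0 : Hstar < f (x 0))
    -- compactness of the level set of H at x⁰ and its (Euclidean) diameter R relative
    -- to the set of minimizers
    (hcomp : IsCompact {z : EuclideanSpace ℝ (Fin n) × EuclideanSpace ℝ (Fin m) |
      f z ≤ f (x 0)})
    (R : ℝ) (hRpos : 0 < R)
    (hR : ∀ z, f z ≤ f (x 0) → ∀ y, f y = Hstar →
      ‖z.1 - y.1‖ ^ 2 + ‖z.2 - y.2‖ ^ 2 ≤ R ^ 2) :
    (∀ k : ℕ,
      f (x k) - Hstar ≤
        2 * ((1 / L₁) + (1 / L₂))⁻¹ * R ^ 2 /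
          ((k : ℝ) + 2 * R ^ 2 * ((1 / L₁) + (1 / L₂))⁻¹ * (f (x 0) - Hstar)⁻¹)) ∧
    (∀ k : ℕ, 1 ≤ k →
      f (x k) - Hstar ≤ 2 * ((1 / L₁) + (1 / L₂))⁻¹ * R ^ 2 / (k : ℝ)) :=
  stmt14_general f hfconv hfdiff L₁ L₂ hL₁pos hL₂pos hlip₁ hlip₂ Hstar hHstarle hHstarex x hinit
    hstep1 hstep2 hH0 R hRpos hR
end

section
/- For every k ≥ 0 the alternating minimization iterates satisfy the descent properties H^k − H^{k+1/2} ≥ (1/(2L₁R²)) (H^k − H*)² and H^{k+1/2} − H^{k+1} ≥ (1/(2L₂R²)) (H^{k+1/2} − H*)², where H^{k+1/2} = H(x₁^{k+1}, x₂^k). -/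
open Set

/-!
By convexity, `f z - f* ≤ f'(z) (z - x*)` for a minimizer `x*`. At every iterate of alternating
minimization one block of the gradient vanishes, so the gap is at most `‖∇ᵢ f(z)‖ ‖zᵢ - x*ᵢ‖`,
and `‖zᵢ - x*ᵢ‖ ≤ R` because the iterates stay in the level set of `x⁰`. On the other hand, by the
descent lemma for the `Lᵢ`-Lipschitz partial gradient, a single gradient step of length `1 / Lᵢ`
in block `i`, and a fortiori exact minimization in that block, lowers `f` by at least
`‖∇ᵢ f(z)‖² / (2 Lᵢ)`. The second block reduces to the first by swapping the factors.
-/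

section

variable {E : Type*} [NormedAddCommGroup E] [NormedSpace ℝ E]

theorem ConvexOn.apply_sub_le_of_hasFDerivAt {f : E → ℝ} (hf : ConvexOn ℝ univ f)
    {f' : E →L[ℝ] ℝ} {x : E} (hx : HasFDerivAt f f' x) (y : E) :
    f x - f y ≤ f' (x - y) := by
  have hline : ConvexOn ℝ univ (fun t : ℝ => f (x + t • (y - x))) := by
    simpa [Function.comp_def, AffineMap.lineMap_apply, add_comm] using
      hf.comp_affineMap (AffineMap.lineMap x y)
  have hderiv : HasDerivAt (fun t : ℝ => f (x + t • (y - x))) (f' (y - x)) 0 := by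
    have hpath : HasDerivAt (fun t : ℝ => x + t • (y - x)) (y - x) 0 := by
      simpa using ((hasDerivAt_id (0 : ℝ)).smul_const (y - x)).const_add x
    exact (by simpa using hx : HasFDerivAt f f' (x + (0 : ℝ) • (y - x))).comp_hasDerivAt 0 hpath
  have hslope := hline.le_slope_of_hasDerivAt (mem_univ 0) (mem_univ 1) zero_lt_one hderiv
  simp only [slope_def_field, one_smul, zero_smul, add_zero, add_sub_cancel, sub_zero,
    div_one] at hslope
  have hneg : f' (x - y) = -f' (y - x) := by rw [← map_neg, neg_sub]
  linarith

theorem apply_le_add_fderiv_add_sq {g : E → ℝ} {g' : E → E →L[ℝ] ℝ}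
    (hg : ∀ z, HasFDerivAt g (g' z) z) {L : ℝ} {x : E}
    (hlip : ∀ w, ‖g' w - g' x‖ ≤ L * ‖w - x‖) (y : E) :
    g y ≤ g x + g' x (y - x) + L / 2 * ‖y - x‖ ^ 2 := by
  set v := y - x
  set ψ : ℝ → ℝ := fun t => g (x + t • v) - t * g' x v - L / 2 * t ^ 2 * ‖v‖ ^ 2
  have hψ : ∀ t, HasDerivAt ψ (g' (x + t • v) v - g' x v - L * t * ‖v‖ ^ 2) t := by
    intro t
    have hpath : HasDerivAt (fun t : ℝ => x + t • v) v t := by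
      simpa using ((hasDerivAt_id t).smul_const v).const_add x
    have := (((hg _).comp_hasDerivAt t hpath).sub ((hasDerivAt_id t).mul_const (g' x v))).sub
      (((hasDerivAt_pow 2 t).const_mul (L / 2)).mul_const (‖v‖ ^ 2))
    exact this.congr_deriv (by push_cast; ring)
  have hψ' : ∀ t ∈ interior (Icc (0 : ℝ) 1),
      g' (x + t • v) v - g' x v - L * t * ‖v‖ ^ 2 ≤ 0 := by
    intro t ht
    rw [interior_Icc] at ht
    have ht0 : 0 ≤ t := ht.1.le
    calc g' (x + t • v) v - g' x v - L * t * ‖v‖ ^ 2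
        = (g' (x + t • v) - g' x) v - L * t * ‖v‖ ^ 2 := by simp
      _ ≤ ‖g' (x + t • v) - g' x‖ * ‖v‖ - L * t * ‖v‖ ^ 2 := by
        gcongr; exact (Real.le_norm_self _).trans (ContinuousLinearMap.le_opNorm _ _)
      _ ≤ L * (t * ‖v‖) * ‖v‖ - L * t * ‖v‖ ^ 2 := by
        gcongr
        simpa [norm_smul, abs_of_nonneg ht0] using hlip (x + t • v)
      _ = 0 := by ring
  have hanti := antitoneOn_of_hasDerivWithinAt_nonpos (convex_Icc 0 1)
    (HasDerivAt.continuousOn fun t _ => hψ t) (fun t _ => (hψ t).hasDerivWithinAt) hψ'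
  have h01 : ψ 1 ≤ ψ 0 :=
    hanti (left_mem_Icc.2 zero_le_one) (right_mem_Icc.2 zero_le_one) zero_le_one
  simp only [ψ, v, one_smul, zero_smul, add_zero, add_sub_cancel, one_mul, one_pow, zero_mul,
    sub_zero, zero_pow two_ne_zero, mul_zero] at h01
  linarith

end

section

variable {E : Type*} [NormedAddCommGroup E] [InnerProductSpace ℝ E] [CompleteSpace E]

theorem sq_norm_fderiv_div_le_sub_min {g : E → ℝ} {g' : E → E →L[ℝ] ℝ}
    (hg : ∀ z, HasFDerivAt g (g' z) z) {L : ℝ} (hL : 0 < L) {x : E}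
    (hlip : ∀ w, ‖g' w - g' x‖ ≤ L * ‖w - x‖) {xmin : E} (hmin : ∀ y, g xmin ≤ g y) :
    ‖g' x‖ ^ 2 / (2 * L) ≤ g x - g xmin := by
  set grad := (InnerProductSpace.toDual ℝ E).symm (g' x)
  have hdescent := apply_le_add_fderiv_add_sq hg hlip (x - L⁻¹ • grad)
  have hgrad : g' x grad = ‖g' x‖ ^ 2 := by
    rw [← InnerProductSpace.toDual_symm_apply, real_inner_self_eq_norm_sq,
      LinearIsometryEquiv.norm_map]
  have hnorm : ‖grad‖ = ‖g' x‖ := LinearIsometryEquiv.norm_map _ _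
  simp only [sub_sub_cancel_left, map_neg, map_smul, hgrad, norm_neg, norm_smul, hnorm,
    Real.norm_eq_abs, abs_inv, abs_of_pos hL, smul_eq_mul] at hdescent
  have hmin_step := hmin (x - L⁻¹ • grad)
  have hval : ‖g' x‖ ^ 2 / (2 * L) = L⁻¹ * ‖g' x‖ ^ 2 - L / 2 * (L⁻¹ * ‖g' x‖) ^ 2 := by
    field_simp; ring
  linarith

end

section ProductDerivative

open ContinuousLinearMap

variable {E F : Type*} [NormedAddCommGroup E] [NormedSpace ℝ E]
  [NormedAddCommGroup F] [NormedSpace ℝ F]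

theorem comp_inr_eq_zero_of_forall_le_snd {f : E × F → ℝ} {f' : E × F →L[ℝ] ℝ} {z : E × F}
    (hf : HasFDerivAt f f' z) (hz : ∀ y, f z ≤ f (z.1, y)) : f'.comp (inr ℝ E F) = 0 :=
  IsLocalMin.hasFDerivAt_eq_zero (Filter.Eventually.of_forall hz)
    (hf.comp z.2 (hasFDerivAt_prodMk_right z.1 z.2))

theorem apply_eq_comp_inl_add_comp_inr (f' : E × F →L[ℝ] ℝ) (u : E × F) :
    f' u = f'.comp (inl ℝ E F) u.1 + f'.comp (inr ℝ E F) u.2 := by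
  rw [comp_apply, comp_apply, ← map_add, inl_apply, inr_apply, Prod.mk_add_mk, add_zero, zero_add]

theorem fderiv_comp_swap {f : E × F → ℝ} (w : F × E) :
    fderiv ℝ (f ∘ Prod.swap) w =
      (fderiv ℝ f w.swap).comp (ContinuousLinearEquiv.prodComm ℝ F E : F × E →L[ℝ] E × F) :=
  (ContinuousLinearEquiv.prodComm ℝ F E).comp_right_fderiv

theorem sub_le_norm_comp_inl_mul {f : E × F → ℝ} (hconv : ConvexOn ℝ univ f)
    {f' : E × F →L[ℝ] ℝ} {z : E × F} (hf : HasFDerivAt f f' z) (hz : ∀ y, f z ≤ f (z.1, y))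
    (xs : E × F) : f z - f xs ≤ ‖f'.comp (inl ℝ E F)‖ * ‖z.1 - xs.1‖ :=
  calc f z - f xs ≤ f' (z - xs) := hconv.apply_sub_le_of_hasFDerivAt hf xs
    _ = f'.comp (inl ℝ E F) (z.1 - xs.1) := by
      rw [apply_eq_comp_inl_add_comp_inr, comp_inr_eq_zero_of_forall_le_snd hf hz]
      simp
    _ ≤ ‖f'.comp (inl ℝ E F)‖ * ‖z.1 - xs.1‖ := (Real.le_norm_self _).trans (le_opNorm _ _)

end ProductDerivative

section BlockMinimization

open ContinuousLinearMap

variable {E F : Type*} [NormedAddCommGroup E] [NormedAddCommGroup F]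

theorem one_div_mul_sq_sub_min_le_of_minimize_fst [InnerProductSpace ℝ E] [CompleteSpace E]
    [NormedSpace ℝ F] {f : E × F → ℝ} (hconv : ConvexOn ℝ univ f)
    (hdiff : Differentiable ℝ f) {L : ℝ} (hL : 0 < L)
    (hlip : ∀ (z : E × F) (h : E),
      ‖(fderiv ℝ f (z.1 + h, z.2)).comp (inl ℝ E F) - (fderiv ℝ f z).comp (inl ℝ E F)‖ ≤
        L * ‖h‖)
    {xs z : E × F} (hxs : ∀ w, f xs ≤ f w) (hz : ∀ y, f z ≤ f (z.1, y))
    {y : E} (hy : ∀ y', f (y, z.2) ≤ f (y', z.2)) {R : ℝ} (hR : ‖z.1 - xs.1‖ ^ 2 ≤ R ^ 2) :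
    1 / (2 * L * R ^ 2) * (f z - f xs) ^ 2 ≤ f z - f (y, z.2) := by
  set D := (fderiv ℝ f z).comp (inl ℝ E F)
  have hgap : f z - f xs ≤ ‖D‖ * ‖z.1 - xs.1‖ :=
    sub_le_norm_comp_inl_mul hconv (hdiff z).hasFDerivAt hz xs
  have hdecrease : ‖D‖ ^ 2 / (2 * L) ≤ f z - f (y, z.2) := by
    simpa using sq_norm_fderiv_div_le_sub_min (g := fun w => f (w, z.2))
      (fun w => (hdiff _).hasFDerivAt.comp w (hasFDerivAt_prodMk_left w z.2)) hL
      (x := z.1) (fun w => by simpa using hlip z (w - z.1)) hy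
  calc 1 / (2 * L * R ^ 2) * (f z - f xs) ^ 2
      ≤ 1 / (2 * L * R ^ 2) * (‖D‖ ^ 2 * R ^ 2) := by
        gcongr
        calc (f z - f xs) ^ 2 ≤ (‖D‖ * ‖z.1 - xs.1‖) ^ 2 :=
              pow_le_pow_left₀ (sub_nonneg.2 (hxs z)) hgap 2
          _ ≤ ‖D‖ ^ 2 * R ^ 2 := by rw [mul_pow]; gcongr
    _ ≤ ‖D‖ ^ 2 / (2 * L) := by
        rcases eq_or_ne R 0 with rfl | hR0
        · simp only [ne_eq, OfNat.ofNat_ne_zero, not_false_eq_true, zero_pow, mul_zero,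
            div_zero]
          positivity
        · exact le_of_eq (by field_simp)
    _ ≤ f z - f (y, z.2) := hdecrease

theorem one_div_mul_sq_sub_min_le_of_minimize_snd [NormedSpace ℝ E] [InnerProductSpace ℝ F]
    [CompleteSpace F] {f : E × F → ℝ} (hconv : ConvexOn ℝ univ f)
    (hdiff : Differentiable ℝ f) {L : ℝ} (hL : 0 < L)
    (hlip : ∀ (z : E × F) (h : F),
      ‖(fderiv ℝ f (z.1, z.2 + h)).comp (inr ℝ E F) - (fderiv ℝ f z).comp (inr ℝ E F)‖ ≤
        L * ‖h‖)
    {xs z : E × F} (hxs : ∀ w, f xs ≤ f w) (hz : ∀ x, f z ≤ f (x, z.2))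
    {y : F} (hy : ∀ y', f (z.1, y) ≤ f (z.1, y')) {R : ℝ} (hR : ‖z.2 - xs.2‖ ^ 2 ≤ R ^ 2) :
    1 / (2 * L * R ^ 2) * (f z - f xs) ^ 2 ≤ f z - f (z.1, y) := by
  have hswap : ∀ A : E × F →L[ℝ] ℝ,
      (A.comp (ContinuousLinearEquiv.prodComm ℝ F E : F × E →L[ℝ] E × F)).comp (inl ℝ F E) =
        A.comp (inr ℝ E F) := fun A => by ext; simp
  simpa using one_div_mul_sq_sub_min_le_of_minimize_fst (f := f ∘ Prod.swap)
    (hconv.comp_linearMap (LinearEquiv.prodComm ℝ F E).toLinearMap)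
    (hdiff.comp (ContinuousLinearEquiv.prodComm ℝ F E).differentiable) hL
    (fun w h => by
      simpa only [fderiv_comp_swap, hswap, Prod.swap_prod_mk, Prod.fst_swap, Prod.snd_swap]
        using hlip w.swap h)
    (xs := xs.swap) (z := z.swap) (fun w => hxs w.swap) (by simpa using hz)
    (y := y) (by simpa using hy) (R := R) (by simpa using hR)

end BlockMinimization

theorem stmt15_general {n m : ℕ}
    (f : EuclideanSpace ℝ (Fin n) × EuclideanSpace ℝ (Fin m) → ℝ)
    (hfconv : ConvexOn ℝ Set.univ f)
    (hfdiff : ContDiff ℝ 1 f)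
    -- block Lipschitz continuity of the partial gradients
    (L₁ L₂ : ℝ) (hL₁pos : 0 < L₁) (hL₂pos : 0 < L₂)
    (hlip₁ : ∀ (z : EuclideanSpace ℝ (Fin n) × EuclideanSpace ℝ (Fin m))
        (h₁ : EuclideanSpace ℝ (Fin n)),
      ‖(fderiv ℝ f (z.1 + h₁, z.2)).comp
          (ContinuousLinearMap.inl ℝ (EuclideanSpace ℝ (Fin n)) (EuclideanSpace ℝ (Fin m))) -
        (fderiv ℝ f z).comp
          (ContinuousLinearMap.inl ℝ (EuclideanSpace ℝ (Fin n)) (EuclideanSpace ℝ (Fin m)))‖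
        ≤ L₁ * ‖h₁‖)
    (hlip₂ : ∀ (z : EuclideanSpace ℝ (Fin n) × EuclideanSpace ℝ (Fin m))
        (h₂ : EuclideanSpace ℝ (Fin m)),
      ‖(fderiv ℝ f (z.1, z.2 + h₂)).comp
          (ContinuousLinearMap.inr ℝ (EuclideanSpace ℝ (Fin n)) (EuclideanSpace ℝ (Fin m))) -
        (fderiv ℝ f z).comp
          (ContinuousLinearMap.inr ℝ (EuclideanSpace ℝ (Fin n)) (EuclideanSpace ℝ (Fin m)))‖
        ≤ L₂ * ‖h₂‖)
    -- nonempty set of minimizers, with minimal value H*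
    (Hstar : ℝ) (hHstarle : ∀ z, Hstar ≤ f z) (hHstarex : ∃ z, f z = Hstar)
    -- the alternating minimization sequence
    (x : ℕ → EuclideanSpace ℝ (Fin n) × EuclideanSpace ℝ (Fin m))
    (hinit : ∀ y₂, f (x 0) ≤ f ((x 0).1, y₂))
    (hstep1 : ∀ (k : ℕ) y₁, f ((x (k + 1)).1, (x k).2) ≤ f (y₁, (x k).2))
    (hstep2 : ∀ (k : ℕ) y₂, f (x (k + 1)) ≤ f ((x (k + 1)).1, y₂))
    -- compactness of the level set of H at x⁰ and its (Euclidean) diameter R relative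
    -- to the set of minimizers
    (R : ℝ)
    (hR : ∀ z, f z ≤ f (x 0) → ∀ y, f y = Hstar →
      ‖z.1 - y.1‖ ^ 2 + ‖z.2 - y.2‖ ^ 2 ≤ R ^ 2) :
    ∀ k : ℕ,
      1 / (2 * L₁ * R ^ 2) * (f (x k) - Hstar) ^ 2 ≤
        f (x k) - f ((x (k + 1)).1, (x k).2) ∧
      1 / (2 * L₂ * R ^ 2) * (f ((x (k + 1)).1, (x k).2) - Hstar) ^ 2 ≤
        f ((x (k + 1)).1, (x k).2) - f (x (k + 1)) := by
  obtain ⟨xs, rfl⟩ := hHstarex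
  have hdiff : Differentiable ℝ f := hfdiff.differentiable one_ne_zero
  have hhalf_le : ∀ k, f ((x (k + 1)).1, (x k).2) ≤ f (x k) := fun k => hstep1 k (x k).1
  have hlevel : ∀ k, f (x k) ≤ f (x 0) := by
    intro k
    induction k with
    | zero => exact le_rfl
    | succ k ih => exact (hstep2 k _).trans ((hhalf_le k).trans ih)
  have hblock : ∀ z, f z ≤ f (x 0) → ‖z.1 - xs.1‖ ^ 2 ≤ R ^ 2 ∧ ‖z.2 - xs.2‖ ^ 2 ≤ R ^ 2 :=
    fun z hz => ⟨(le_add_of_nonneg_right (sq_nonneg _)).trans (hR z hz xs rfl),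
      (le_add_of_nonneg_left (sq_nonneg _)).trans (hR z hz xs rfl)⟩
  have hsnd_min : ∀ k y, f (x k) ≤ f ((x k).1, y) := by
    rintro (_ | k) y
    exacts [hinit y, hstep2 k y]
  intro k
  exact ⟨one_div_mul_sq_sub_min_le_of_minimize_fst hfconv hdiff hL₁pos hlip₁ hHstarle
      (hsnd_min k) (hstep1 k) (hblock _ (hlevel k)).1,
    one_div_mul_sq_sub_min_le_of_minimize_snd hfconv hdiff hL₂pos hlip₂ hHstarle
      (hstep1 k) (hstep2 k) (hblock _ ((hhalf_le k).trans (hlevel k))).2⟩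

/-- descent properties of alternating minimization in the smooth
convex Euclidean case: for every `k ≥ 0`,
`H^k - H^{k+1/2} ≥ (1/(2L₁R²)) (H^k - H*)²` and
`H^{k+1/2} - H^{k+1} ≥ (1/(2L₂R²)) (H^{k+1/2} - H*)²`, where
`H^{k+1/2} = H(x₁^{k+1}, x₂^k)`. Here `g₁ ≡ g₂ ≡ 0`, so `H = f`, and the product
space carries the Euclidean norm `‖(x₁,x₂)‖² = ‖x₁‖² + ‖x₂‖²`. -/
theorem stmt15 {n m : ℕ}
    (f : EuclideanSpace ℝ (Fin n) × EuclideanSpace ℝ (Fin m) → ℝ)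
    (hfconv : ConvexOn ℝ Set.univ f)
    (hfdiff : ContDiff ℝ 1 f)
    -- block Lipschitz continuity of the partial gradients
    (L₁ L₂ : ℝ) (hL₁pos : 0 < L₁) (hL₂pos : 0 < L₂)
    (hlip₁ : ∀ (z : EuclideanSpace ℝ (Fin n) × EuclideanSpace ℝ (Fin m))
        (h₁ : EuclideanSpace ℝ (Fin n)),
      ‖(fderiv ℝ f (z.1 + h₁, z.2)).comp
          (ContinuousLinearMap.inl ℝ (EuclideanSpace ℝ (Fin n)) (EuclideanSpace ℝ (Fin m))) -
        (fderiv ℝ f z).comp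
          (ContinuousLinearMap.inl ℝ (EuclideanSpace ℝ (Fin n)) (EuclideanSpace ℝ (Fin m)))‖
        ≤ L₁ * ‖h₁‖)
    (hlip₂ : ∀ (z : EuclideanSpace ℝ (Fin n) × EuclideanSpace ℝ (Fin m))
        (h₂ : EuclideanSpace ℝ (Fin m)),
      ‖(fderiv ℝ f (z.1, z.2 + h₂)).comp
          (ContinuousLinearMap.inr ℝ (EuclideanSpace ℝ (Fin n)) (EuclideanSpace ℝ (Fin m))) -
        (fderiv ℝ f z).comp
          (ContinuousLinearMap.inr ℝ (EuclideanSpace ℝ (Fin n)) (EuclideanSpace ℝ (Fin m)))‖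
        ≤ L₂ * ‖h₂‖)
    -- nonempty set of minimizers, with minimal value H*
    (Hstar : ℝ) (hHstarle : ∀ z, Hstar ≤ f z) (hHstarex : ∃ z, f z = Hstar)
    -- the alternating minimization sequence
    (x : ℕ → EuclideanSpace ℝ (Fin n) × EuclideanSpace ℝ (Fin m))
    (hinit : ∀ y₂, f (x 0) ≤ f ((x 0).1, y₂))
    (hstep1 : ∀ (k : ℕ) y₁, f ((x (k + 1)).1, (x k).2) ≤ f (y₁, (x k).2))
    (hstep2 : ∀ (k : ℕ) y₂, f (x (k + 1)) ≤ f ((x (k + 1)).1, y₂))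
    -- compactness of the level set of H at x⁰ and its (Euclidean) diameter R relative
    -- to the set of minimizers
    (hcomp : IsCompact {z : EuclideanSpace ℝ (Fin n) × EuclideanSpace ℝ (Fin m) |
      f z ≤ f (x 0)})
    (R : ℝ) (hRpos : 0 < R)
    (hR : ∀ z, f z ≤ f (x 0) → ∀ y, f y = Hstar →
      ‖z.1 - y.1‖ ^ 2 + ‖z.2 - y.2‖ ^ 2 ≤ R ^ 2) :
    ∀ k : ℕ,
      1 / (2 * L₁ * R ^ 2) * (f (x k) - Hstar) ^ 2 ≤
        f (x k) - f ((x (k + 1)).1, (x k).2) ∧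
      1 / (2 * L₂ * R ^ 2) * (f ((x (k + 1)).1, (x k).2) - Hstar) ^ 2 ≤
        f ((x (k + 1)).1, (x k).2) - f (x (k + 1)) :=
  stmt15_general f hfconv hfdiff L₁ L₂ hL₁pos hL₂pos hlip₁ hlip₂ Hstar hHstarle hHstarex x hinit
    hstep1 hstep2 R hR
end

section
/- The alternating minimization applied to the quadratic function H converges q-linearly: for every k ≥ 0, H^{k+1} − H* ≤ (1 − λ_min(A^{-1/2} S_A A^{-1/2})) (1 − λ_min(C^{-1/2} S_C C^{-1/2})) (H^k − H*), where S_A = A − Bᵀ C^{-1} B and S_C = C − B A^{-1} Bᵀ are the Schur complements and λ_min denotes the smallest eigenvalue of a symmetric positive definite matrix. -/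
open Matrix

/-- The smallest eigenvalue of a symmetric matrix, characterized as the largest constant
`c` such that `vᵀ M v ≥ c ‖v‖²` for all `v`. -/
noncomputable def lambdaMin {k : ℕ} (M : Matrix (Fin k) (Fin k) ℝ) : ℝ :=
  sSup {c : ℝ | ∀ v : Fin k → ℝ, c * (v ⬝ᵥ v) ≤ v ⬝ᵥ M.mulVec v}

/-- The square root of a positive semidefinite matrix, as `Matrix.PosSemidef.sqrt` was
defined in the older Mathlib. -/
noncomputable def posSemidefSqrt {k : ℕ} {M : Matrix (Fin k) (Fin k) ℝ} (hM : M.PosSemidef) :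
    Matrix (Fin k) (Fin k) ℝ :=
  hM.1.eigenvectorUnitary.1 * diagonal ((↑) ∘ (√·) ∘ hM.1.eigenvalues) *
    (star hM.1.eigenvectorUnitary : Matrix (Fin k) (Fin k) ℝ)

/-! Let `(p, q)` minimise `H`; then `H - H*` is the quadratic form `Q = blockQuadForm` of the
error `(w, u)`. After an `x₂`-update the error satisfies `C u + B w = 0`, so
`Q (w, u) = ½ wᵀ S_A w`, and the next `x₁`-update does at least as well as
`w ↦ w - A⁻¹ S_A w`, which leaves `½ wᵀ S_A w - ½ (S_A w)ᵀ A⁻¹ (S_A w)`. With `v = A^{1/2} w` and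
`T = A^{-1/2} S_A A^{-1/2}` these are `½ vᵀ T v` and `½ |T v|²`, and `|T v|² ≥ λ_min(T) vᵀ T v`
by Cauchy–Schwarz. The `x₂`-update is the same argument with the two blocks swapped, and its
factor `1 - λ_min` is nonnegative since `S_C ≤ C`. -/

open Filter Topology

lemma Matrix.IsHermitian.isSymm_of_real {ι : Type*} {A : Matrix ι ι ℝ} (hA : A.IsHermitian) :
    A.IsSymm :=
  (conjTranspose_eq_transpose_of_trivial A).symm.trans hA

section Quadratic

variable {ι κ : Type*} [Fintype ι] [Fintype κ]

lemma Matrix.IsSymm.dotProduct_mulVec_comm {A : Matrix ι ι ℝ} (hA : A.IsSymm) (x y : ι → ℝ) :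
    x ⬝ᵥ A *ᵥ y = y ⬝ᵥ A *ᵥ x := by
  conv_lhs => rw [← hA]
  exact dotProduct_transpose_mulVec A x y

lemma Matrix.IsSymm.dotProduct_mul_mul_mulVec {R : Matrix ι ι ℝ} (hR : R.IsSymm)
    (S : Matrix ι ι ℝ) (v : ι → ℝ) : v ⬝ᵥ (R * S * R) *ᵥ v = (R *ᵥ v) ⬝ᵥ S *ᵥ (R *ᵥ v) := by
  rw [← mulVec_mulVec, ← mulVec_mulVec, hR.dotProduct_mulVec_comm, dotProduct_comm]

lemma Matrix.PosSemidef.mul_mul_of_isSymm {R S : Matrix ι ι ℝ} (hS : S.PosSemidef)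
    (hR : R.IsSymm) : (R * S * R).PosSemidef := by
  simpa [conjTranspose_eq_transpose_of_trivial, hR.eq] using hS.mul_mul_conjTranspose_same R

lemma Matrix.PosDef.posSemidef_schur_complements [DecidableEq ι] [DecidableEq κ]
    {A : Matrix ι ι ℝ} {B : Matrix κ ι ℝ} {C : Matrix κ κ ℝ} (hM : (fromBlocks A Bᵀ B C).PosDef)
    (hA : A.PosDef) (hC : C.PosDef) :
    (A - Bᵀ * C⁻¹ * B).PosSemidef ∧ (C - B * A⁻¹ * Bᵀ).PosSemidef := by
  let := hA.isUnit.invertible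
  let := hC.isUnit.invertible
  have hB : (Bᵀ)ᴴ = B := by rw [conjTranspose_eq_transpose_of_trivial, transpose_transpose]
  have h : (fromBlocks A Bᵀ (Bᵀ)ᴴ C).PosSemidef := hB ▸ hM.posSemidef
  exact ⟨hB ▸ (PosDef.fromBlocks₂₂ A Bᵀ hC).mp h, hB ▸ (PosDef.fromBlocks₁₁ Bᵀ C hA).mp h⟩

lemma eq_zero_of_forall_dotProduct_add_dotProduct_mulVec_nonneg (Q : Matrix ι ι ℝ) (g : ι → ℝ)
    (h : ∀ v, 0 ≤ v ⬝ᵥ g + v ⬝ᵥ Q *ᵥ v) : g = 0 := by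
  have hscaled : ∀ t : ℝ, 0 < t → g ⬝ᵥ g ≤ t * (g ⬝ᵥ Q *ᵥ g) := fun t ht => by
    have := h (-t • g)
    simp only [mulVec_smul, dotProduct_smul, smul_dotProduct, smul_eq_mul] at this
    nlinarith
  have hlim : Tendsto (fun t : ℝ => t * (g ⬝ᵥ Q *ᵥ g)) (𝓝[>] 0) (𝓝 0) := by
    simpa using ((tendsto_id (x := 𝓝 (0 : ℝ))).mul_const (g ⬝ᵥ Q *ᵥ g)).mono_left
      nhdsWithin_le_nhds
  have hle : g ⬝ᵥ g ≤ 0 := ge_of_tendsto hlim (eventually_nhdsWithin_of_forall hscaled)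
  simpa using dotProduct_star_self_eq_zero.mp
    (le_antisymm hle (by simpa using dotProduct_star_self_nonneg g))

noncomputable def blockQuadForm (A : Matrix ι ι ℝ) (B : Matrix κ ι ℝ) (C : Matrix κ κ ℝ)
    (x₁ : ι → ℝ) (x₂ : κ → ℝ) : ℝ :=
  1 / 2 * (x₁ ⬝ᵥ A *ᵥ x₁ + 2 * (x₂ ⬝ᵥ B *ᵥ x₁) + x₂ ⬝ᵥ C *ᵥ x₂)

noncomputable def blockQuadratic (A : Matrix ι ι ℝ) (B : Matrix κ ι ℝ) (C : Matrix κ κ ℝ)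
    (b₁ : ι → ℝ) (b₂ : κ → ℝ) (x₁ : ι → ℝ) (x₂ : κ → ℝ) : ℝ :=
  blockQuadForm A B C x₁ x₂ - b₁ ⬝ᵥ x₁ - b₂ ⬝ᵥ x₂

variable {A : Matrix ι ι ℝ} {B : Matrix κ ι ℝ} {C : Matrix κ κ ℝ} {b₁ : ι → ℝ} {b₂ : κ → ℝ}

lemma blockQuadForm_swap (x₁ : ι → ℝ) (x₂ : κ → ℝ) :
    blockQuadForm C Bᵀ A x₂ x₁ = blockQuadForm A B C x₁ x₂ := by
  simp only [blockQuadForm, dotProduct_transpose_mulVec]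
  ring

lemma blockQuadratic_swap (x₁ : ι → ℝ) (x₂ : κ → ℝ) :
    blockQuadratic C Bᵀ A b₂ b₁ x₂ x₁ = blockQuadratic A B C b₁ b₂ x₁ x₂ := by
  simp only [blockQuadratic, blockQuadForm_swap]
  ring

lemma blockQuadratic_add (hA : A.IsSymm) (hC : C.IsSymm) (x₁ w : ι → ℝ) (x₂ u : κ → ℝ) :
    blockQuadratic A B C b₁ b₂ (x₁ + w) (x₂ + u) = blockQuadratic A B C b₁ b₂ x₁ x₂
      + w ⬝ᵥ (A *ᵥ x₁ + Bᵀ *ᵥ x₂ - b₁) + u ⬝ᵥ (B *ᵥ x₁ + C *ᵥ x₂ - b₂)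
      + blockQuadForm A B C w u := by
  simp only [blockQuadratic, blockQuadForm, mulVec_add, dotProduct_add, add_dotProduct,
    dotProduct_sub, dotProduct_transpose_mulVec, hA.dotProduct_mulVec_comm x₁ w,
    hC.dotProduct_mulVec_comm x₂ u, dotProduct_comm w b₁, dotProduct_comm u b₂]
  ring

lemma blockQuadratic_stationary_snd (hA : A.IsSymm) (hC : C.IsSymm) {x₁ : ι → ℝ} {x₂ : κ → ℝ}
    (h : ∀ y₂, blockQuadratic A B C b₁ b₂ x₁ x₂ ≤ blockQuadratic A B C b₁ b₂ x₁ y₂) :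
    B *ᵥ x₁ + C *ᵥ x₂ = b₂ := by
  refine sub_eq_zero.mp (eq_zero_of_forall_dotProduct_add_dotProduct_mulVec_nonneg
    ((1 / 2 : ℝ) • C) _ fun v => ?_)
  have := h (x₂ + v)
  rw [← add_zero x₁, blockQuadratic_add hA hC, add_zero] at this
  simp only [blockQuadForm, mulVec_zero, dotProduct_zero, zero_dotProduct, smul_mulVec,
    dotProduct_smul, smul_eq_mul] at this ⊢
  linarith

lemma blockQuadratic_stationary_fst (hA : A.IsSymm) (hC : C.IsSymm) {x₁ : ι → ℝ} {x₂ : κ → ℝ}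
    (h : ∀ y₁, blockQuadratic A B C b₁ b₂ x₁ x₂ ≤ blockQuadratic A B C b₁ b₂ y₁ x₂) :
    A *ᵥ x₁ + Bᵀ *ᵥ x₂ = b₁ := by
  rw [add_comm]
  refine blockQuadratic_stationary_snd (B := Bᵀ) (b₁ := b₂) (b₂ := b₁) hC hA fun y₁ => ?_
  simpa only [blockQuadratic_swap] using h y₁

lemma blockQuadratic_sub_of_isMin (hA : A.IsSymm) (hC : C.IsSymm) {p : ι → ℝ} {q : κ → ℝ}
    (hmin : ∀ z₁ z₂, blockQuadratic A B C b₁ b₂ p q ≤ blockQuadratic A B C b₁ b₂ z₁ z₂)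
    (x₁ : ι → ℝ) (x₂ : κ → ℝ) :
    blockQuadratic A B C b₁ b₂ x₁ x₂ - blockQuadratic A B C b₁ b₂ p q
      = blockQuadForm A B C (x₁ - p) (x₂ - q) := by
  have h₁ := blockQuadratic_stationary_fst hA hC fun z₁ => hmin z₁ q
  have h₂ := blockQuadratic_stationary_snd hA hC fun z₂ => hmin p z₂
  conv_lhs => rw [← add_sub_cancel p x₁, ← add_sub_cancel q x₂, blockQuadratic_add hA hC]
  simp [h₁, h₂]

lemma blockQuadForm_sub_of_mulVec_add_mulVec_eq_zero [DecidableEq κ] (hA : A.IsSymm)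
    (hC : IsUnit C) {w : ι → ℝ} {u : κ → ℝ} (hu : C *ᵥ u + B *ᵥ w = 0) (d : ι → ℝ) :
    blockQuadForm A B C (w - d) u = 1 / 2 * (w ⬝ᵥ (A - Bᵀ * C⁻¹ * B) *ᵥ w
      - 2 * (d ⬝ᵥ (A - Bᵀ * C⁻¹ * B) *ᵥ w) + d ⬝ᵥ A *ᵥ d) := by
  have hCu : C *ᵥ u = -(B *ᵥ w) := eq_neg_of_add_eq_zero_left hu
  have hu' : u = -(C⁻¹ *ᵥ (B *ᵥ w)) := by
    rw [← mulVec_neg, ← hCu, mulVec_mulVec, nonsing_inv_mul _ ((isUnit_iff_isUnit_det C).mp hC),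
      one_mulVec]
  have hBu : Bᵀ *ᵥ u = (A - Bᵀ * C⁻¹ * B) *ᵥ w - A *ᵥ w := by
    simp only [hu', sub_mulVec, ← mulVec_mulVec, mulVec_neg]
    abel
  rw [blockQuadForm, ← dotProduct_transpose_mulVec B, hCu, dotProduct_neg,
    ← dotProduct_transpose_mulVec B, hBu]
  simp only [mulVec_sub, dotProduct_sub, sub_dotProduct, hA.dotProduct_mulVec_comm w d]
  ring

end Quadratic

section Spectral

variable {k : ℕ}

lemma lambdaMin_mul_dotProduct_self_le {T : Matrix (Fin k) (Fin k) ℝ} (hT : T.PosSemidef)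
    (v : Fin k → ℝ) : lambdaMin T * (v ⬝ᵥ v) ≤ v ⬝ᵥ T *ᵥ v := by
  rcases eq_or_ne v 0 with rfl | hv
  · simp
  have hvv : 0 < v ⬝ᵥ v := by simpa using dotProduct_star_self_pos_iff.mpr hv
  rw [← le_div_iff₀ hvv]
  refine csSup_le ⟨0, fun u => by simpa using hT.dotProduct_mulVec_nonneg u⟩ fun c hc => ?_
  exact (le_div_iff₀ hvv).mpr (hc v)

lemma lambdaMin_le_one (hk : 0 < k) {T : Matrix (Fin k) (Fin k) ℝ} (hT : T.PosSemidef)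
    (hle : ∀ v, v ⬝ᵥ T *ᵥ v ≤ v ⬝ᵥ v) : lambdaMin T ≤ 1 := by
  have he : Pi.single (⟨0, hk⟩ : Fin k) (1 : ℝ) ⬝ᵥ Pi.single ⟨0, hk⟩ 1 = 1 := by simp
  simpa [he] using (lambdaMin_mul_dotProduct_self_le hT _).trans (hle (Pi.single ⟨0, hk⟩ 1))

lemma lambdaMin_mul_dotProduct_mulVec_le {T : Matrix (Fin k) (Fin k) ℝ} (hT : T.PosSemidef)
    (v : Fin k → ℝ) : lambdaMin T * (v ⬝ᵥ T *ᵥ v) ≤ (T *ᵥ v) ⬝ᵥ (T *ᵥ v) := by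
  have hs : 0 ≤ v ⬝ᵥ T *ᵥ v := by simpa using hT.dotProduct_mulVec_nonneg v
  have hd : 0 ≤ (T *ᵥ v) ⬝ᵥ (T *ᵥ v) := by simpa using dotProduct_star_self_nonneg (T *ᵥ v)
  rcases le_or_gt (lambdaMin T) 0 with hlam | hlam
  · exact (mul_nonpos_of_nonpos_of_nonneg hlam hs).trans hd
  rcases hs.eq_or_lt with hs0 | hs0
  · rw [← hs0, mul_zero]
    exact hd
  have hCS : (v ⬝ᵥ T *ᵥ v) ^ 2 ≤ (v ⬝ᵥ v) * ((T *ᵥ v) ⬝ᵥ (T *ᵥ v)) := by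
    simpa [dotProduct, sq] using Finset.sum_mul_sq_le_sq_mul_sq Finset.univ v (T *ᵥ v)
  refine le_of_mul_le_mul_right ?_ hs0
  nlinarith [mul_le_mul_of_nonneg_left hCS hlam.le,
    mul_le_mul_of_nonneg_right (lambdaMin_mul_dotProduct_self_le hT v) hd]

variable {A R S : Matrix (Fin k) (Fin k) ℝ}

lemma lambdaMin_conj_mul_le (hR : R.IsSymm) (hRA : R * R = A) (hA : IsUnit A)
    (hS : S.PosSemidef) (w : Fin k → ℝ) :
    lambdaMin (R⁻¹ * S * R⁻¹) * (w ⬝ᵥ S *ᵥ w) ≤ (S *ᵥ w) ⬝ᵥ A⁻¹ *ᵥ (S *ᵥ w) := by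
  have hRdet : IsUnit R.det :=
    (isUnit_iff_isUnit_det R).mp (isUnit_of_mul_isUnit_left (hRA ▸ hA))
  have hTv : (R⁻¹ * S * R⁻¹) *ᵥ (R *ᵥ w) = R⁻¹ *ᵥ (S *ᵥ w) := by
    rw [mulVec_mulVec, Matrix.mul_assoc, nonsing_inv_mul _ hRdet, Matrix.mul_one, ← mulVec_mulVec]
  have hquad : (R *ᵥ w) ⬝ᵥ (R⁻¹ * S * R⁻¹) *ᵥ (R *ᵥ w) = w ⬝ᵥ S *ᵥ w := by
    rw [hTv, hR.inv.dotProduct_mulVec_comm, mulVec_mulVec, nonsing_inv_mul _ hRdet, one_mulVec,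
      dotProduct_comm]
  have hnorm : (R⁻¹ *ᵥ (S *ᵥ w)) ⬝ᵥ (R⁻¹ *ᵥ (S *ᵥ w)) = (S *ᵥ w) ⬝ᵥ A⁻¹ *ᵥ (S *ᵥ w) := by
    rw [← hRA, Matrix.mul_inv_rev, ← mulVec_mulVec, hR.inv.dotProduct_mulVec_comm]
  have := lambdaMin_mul_dotProduct_mulVec_le (hS.mul_mul_of_isSymm hR.inv) (R *ᵥ w)
  rwa [hquad, hTv, hnorm] at this

lemma lambdaMin_conj_le_one (hk : 0 < k) (hR : R.IsSymm) (hRA : R * R = A) (hA : IsUnit A)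
    (hS : S.PosSemidef) (hSA : (A - S).PosSemidef) : lambdaMin (R⁻¹ * S * R⁻¹) ≤ 1 := by
  have hRdet : IsUnit R.det :=
    (isUnit_iff_isUnit_det R).mp (isUnit_of_mul_isUnit_left (hRA ▸ hA))
  have hRAR : R⁻¹ * A * R⁻¹ = 1 := by
    rw [← hRA, Matrix.mul_assoc, Matrix.mul_assoc, mul_nonsing_inv _ hRdet, Matrix.mul_one,
      nonsing_inv_mul _ hRdet]
  refine lambdaMin_le_one hk (hS.mul_mul_of_isSymm hR.inv) fun v => ?_
  have hgap : 0 ≤ (R⁻¹ *ᵥ v) ⬝ᵥ (A - S) *ᵥ (R⁻¹ *ᵥ v) := by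
    simpa using hSA.dotProduct_mulVec_nonneg (R⁻¹ *ᵥ v)
  have hv : v ⬝ᵥ v = (R⁻¹ *ᵥ v) ⬝ᵥ A *ᵥ (R⁻¹ *ᵥ v) := by
    rw [← hR.inv.dotProduct_mul_mul_mulVec, hRAR, one_mulVec]
  rw [sub_mulVec, dotProduct_sub] at hgap
  rw [hR.inv.dotProduct_mul_mul_mulVec, hv]
  linarith

open MatrixOrder in
lemma posSemidefSqrt_eq_sqrt (hA : A.PosSemidef) : posSemidefSqrt hA = CFC.sqrt A := by
  rw [CFC.sqrt_eq_real_sqrt A hA.nonneg, cfcₙ_eq_cfc, hA.1.cfc_eq, IsHermitian.cfc,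
    Unitary.conjStarAlgAut_apply]
  rfl

open MatrixOrder in
lemma isSymm_posSemidefSqrt (hA : A.PosSemidef) : (posSemidefSqrt hA).IsSymm := by
  rw [posSemidefSqrt_eq_sqrt]
  exact (nonneg_iff_posSemidef.mp (CFC.sqrt_nonneg A)).isHermitian.isSymm_of_real

open MatrixOrder in
lemma posSemidefSqrt_mul_self (hA : A.PosSemidef) : posSemidefSqrt hA * posSemidefSqrt hA = A := by
  rw [posSemidefSqrt_eq_sqrt]
  exact CFC.sqrt_mul_sqrt_self A hA.nonneg

end Spectral

section HalfStep

variable {n m : ℕ} {A : Matrix (Fin n) (Fin n) ℝ} {B : Matrix (Fin m) (Fin n) ℝ}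
  {C : Matrix (Fin m) (Fin m) ℝ} {b₁ : Fin n → ℝ} {b₂ : Fin m → ℝ}

lemma blockQuadForm_fst_min_le {R : Matrix (Fin n) (Fin n) ℝ} (hR : R.IsSymm) (hRA : R * R = A)
    (hA : A.PosDef) (hC : C.PosDef) (hS : (A - Bᵀ * C⁻¹ * B).PosSemidef)
    {w w' : Fin n → ℝ} {u : Fin m → ℝ} (hu : C *ᵥ u + B *ᵥ w = 0)
    (hw' : ∀ y, blockQuadForm A B C w' u ≤ blockQuadForm A B C y u) :
    blockQuadForm A B C w' u ≤
      (1 - lambdaMin (R⁻¹ * (A - Bᵀ * C⁻¹ * B) * R⁻¹)) * blockQuadForm A B C w u := by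
  have hAs := hA.isHermitian.isSymm_of_real
  have hAA : A *ᵥ (A⁻¹ *ᵥ ((A - Bᵀ * C⁻¹ * B) *ᵥ w)) = (A - Bᵀ * C⁻¹ * B) *ᵥ w := by
    rw [mulVec_mulVec, mul_nonsing_inv _ ((isUnit_iff_isUnit_det A).mp hA.isUnit), one_mulVec]
  have hold := blockQuadForm_sub_of_mulVec_add_mulVec_eq_zero hAs hC.isUnit hu 0
  have hnew := blockQuadForm_sub_of_mulVec_add_mulVec_eq_zero hAs hC.isUnit hu
    (A⁻¹ *ᵥ ((A - Bᵀ * C⁻¹ * B) *ᵥ w))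
  rw [hAA, dotProduct_comm (A⁻¹ *ᵥ _)] at hnew
  simp only [sub_zero, zero_dotProduct, mul_zero, add_zero] at hold
  have hlam := lambdaMin_conj_mul_le hR hRA hA.isUnit hS w
  have := hw' (w - A⁻¹ *ᵥ ((A - Bᵀ * C⁻¹ * B) *ᵥ w))
  rw [hold]
  linarith

theorem blockQuadratic_sub_min_le_of_fst_step {R : Matrix (Fin n) (Fin n) ℝ} (hR : R.IsSymm)
    (hRA : R * R = A) (hA : A.PosDef) (hC : C.PosDef) (hS : (A - Bᵀ * C⁻¹ * B).PosSemidef)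
    {p x₁ y₁ : Fin n → ℝ} {q x₂ : Fin m → ℝ}
    (hmin : ∀ z₁ z₂, blockQuadratic A B C b₁ b₂ p q ≤ blockQuadratic A B C b₁ b₂ z₁ z₂)
    (h₂ : ∀ z₂, blockQuadratic A B C b₁ b₂ x₁ x₂ ≤ blockQuadratic A B C b₁ b₂ x₁ z₂)
    (h₁ : ∀ z₁, blockQuadratic A B C b₁ b₂ y₁ x₂ ≤ blockQuadratic A B C b₁ b₂ z₁ x₂) :
    blockQuadratic A B C b₁ b₂ y₁ x₂ - blockQuadratic A B C b₁ b₂ p q ≤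
      (1 - lambdaMin (R⁻¹ * (A - Bᵀ * C⁻¹ * B) * R⁻¹)) *
        (blockQuadratic A B C b₁ b₂ x₁ x₂ - blockQuadratic A B C b₁ b₂ p q) := by
  have hAs := hA.isHermitian.isSymm_of_real
  have hCs := hC.isHermitian.isSymm_of_real
  have herr := blockQuadratic_sub_of_isMin hAs hCs hmin
  have hu : C *ᵥ (x₂ - q) + B *ᵥ (x₁ - p) = 0 := by
    have hx := blockQuadratic_stationary_snd hAs hCs h₂
    have hp := blockQuadratic_stationary_snd hAs hCs fun z₂ => hmin p z₂
    rw [mulVec_sub, mulVec_sub]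
    linear_combination hx - hp
  rw [herr, herr]
  refine blockQuadForm_fst_min_le hR hRA hA hC hS hu fun y => ?_
  simpa only [herr, add_sub_cancel_left] using
    sub_le_sub_right (h₁ (p + y)) (blockQuadratic A B C b₁ b₂ p q)

theorem blockQuadratic_sub_min_le_of_snd_step {R : Matrix (Fin m) (Fin m) ℝ} (hR : R.IsSymm)
    (hRC : R * R = C) (hA : A.PosDef) (hC : C.PosDef) (hS : (C - B * A⁻¹ * Bᵀ).PosSemidef)
    {p x₁ : Fin n → ℝ} {q x₂ y₂ : Fin m → ℝ}
    (hmin : ∀ z₁ z₂, blockQuadratic A B C b₁ b₂ p q ≤ blockQuadratic A B C b₁ b₂ z₁ z₂)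
    (h₁ : ∀ z₁, blockQuadratic A B C b₁ b₂ x₁ x₂ ≤ blockQuadratic A B C b₁ b₂ z₁ x₂)
    (h₂ : ∀ z₂, blockQuadratic A B C b₁ b₂ x₁ y₂ ≤ blockQuadratic A B C b₁ b₂ x₁ z₂) :
    blockQuadratic A B C b₁ b₂ x₁ y₂ - blockQuadratic A B C b₁ b₂ p q ≤
      (1 - lambdaMin (R⁻¹ * (C - B * A⁻¹ * Bᵀ) * R⁻¹)) *
        (blockQuadratic A B C b₁ b₂ x₁ x₂ - blockQuadratic A B C b₁ b₂ p q) := by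
  have hswap := blockQuadratic_swap (A := A) (B := B) (C := C) (b₁ := b₁) (b₂ := b₂)
  have := blockQuadratic_sub_min_le_of_fst_step (B := Bᵀ) (b₁ := b₂) (b₂ := b₁) (p := q) (q := p)
    hR hRC hC hA (by rwa [transpose_transpose])
    (fun z₂ z₁ => by simpa only [hswap] using hmin z₁ z₂) (by simpa only [hswap] using h₁)
    (by simpa only [hswap] using h₂)
  simpa only [hswap, transpose_transpose] using this

end HalfStep

theorem stmt16_general {n m : ℕ} (hm : 1 ≤ m)
    (A : Matrix (Fin n) (Fin n) ℝ) (C : Matrix (Fin m) (Fin m) ℝ)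
    (B : Matrix (Fin m) (Fin n) ℝ) (b₁ : Fin n → ℝ) (b₂ : Fin m → ℝ)
    (hM : (Matrix.fromBlocks A Bᵀ B C).PosDef)
    (hA : A.PosDef) (hC : C.PosDef)
    -- the quadratic objective function
    (H : ((Fin n → ℝ) × (Fin m → ℝ)) → ℝ)
    (hH : ∀ (x₁ : Fin n → ℝ) (x₂ : Fin m → ℝ), H (x₁, x₂) =
      1 / 2 * (x₁ ⬝ᵥ A.mulVec x₁ + 2 * (x₂ ⬝ᵥ B.mulVec x₁) + x₂ ⬝ᵥ C.mulVec x₂)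
        - b₁ ⬝ᵥ x₁ - b₂ ⬝ᵥ x₂)
    -- the minimal value H* (attained since M is positive definite)
    (Hstar : ℝ) (hHstarle : ∀ z, Hstar ≤ H z) (hHstarex : ∃ z, H z = Hstar)
    -- the alternating minimization sequence
    (x : ℕ → (Fin n → ℝ) × (Fin m → ℝ))
    (hinit : ∀ y₂, H (x 0) ≤ H ((x 0).1, y₂))
    (hstep1 : ∀ (k : ℕ) y₁, H ((x (k + 1)).1, (x k).2) ≤ H (y₁, (x k).2))
    (hstep2 : ∀ (k : ℕ) y₂, H (x (k + 1)) ≤ H ((x (k + 1)).1, y₂)) :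
    ∀ k : ℕ,
      H (x (k + 1)) - Hstar ≤
        (1 - lambdaMin ((posSemidefSqrt hA.posSemidef)⁻¹ * (A - Bᵀ * C⁻¹ * B) *
            (posSemidefSqrt hA.posSemidef)⁻¹)) *
        (1 - lambdaMin ((posSemidefSqrt hC.posSemidef)⁻¹ * (C - B * A⁻¹ * Bᵀ) *
            (posSemidefSqrt hC.posSemidef)⁻¹)) *
        (H (x k) - Hstar) := by
  obtain rfl : H = fun z => blockQuadratic A B C b₁ b₂ z.1 z.2 := funext fun z => hH z.1 z.2
  obtain ⟨⟨p, q⟩, rfl⟩ := hHstarex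
  have hmin : ∀ z₁ z₂, blockQuadratic A B C b₁ b₂ p q ≤ blockQuadratic A B C b₁ b₂ z₁ z₂ :=
    fun z₁ z₂ => hHstarle (z₁, z₂)
  obtain ⟨hSA, hSC⟩ := hM.posSemidef_schur_complements hA hC
  have hBAB : (C - (C - B * A⁻¹ * Bᵀ)).PosSemidef := by
    simpa [conjTranspose_eq_transpose_of_trivial] using
      hA.inv.posSemidef.mul_mul_conjTranspose_same B
  intro k
  have hx₂ : ∀ z₂, blockQuadratic A B C b₁ b₂ (x k).1 (x k).2
      ≤ blockQuadratic A B C b₁ b₂ (x k).1 z₂ := by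
    cases k
    exacts [hinit, hstep2 _]
  have stepA := blockQuadratic_sub_min_le_of_fst_step (isSymm_posSemidefSqrt hA.posSemidef)
    (posSemidefSqrt_mul_self _) hA hC hSA hmin hx₂ (hstep1 k)
  have stepC := blockQuadratic_sub_min_le_of_snd_step (isSymm_posSemidefSqrt hC.posSemidef)
    (posSemidefSqrt_mul_self _) hA hC hSC hmin (hstep1 k) (hstep2 k)
  have hlamC := lambdaMin_conj_le_one hm (isSymm_posSemidefSqrt hC.posSemidef)
    (posSemidefSqrt_mul_self _) hC.isUnit hSC hBAB
  calc _ ≤ _ := stepC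
    _ ≤ _ := mul_le_mul_of_nonneg_left stepA (sub_nonneg.mpr hlamC)
    _ = _ := by ring

/-- sharp q-linear convergence of alternating minimization for the
strongly convex quadratic model problem: for every `k ≥ 0`,
`H^{k+1} - H* ≤ (1 - λ_min(A^{-1/2} S_A A^{-1/2})) (1 - λ_min(C^{-1/2} S_C C^{-1/2}))
  (H^k - H*)`,
where `S_A = A - BᵀC⁻¹B`, `S_C = C - BA⁻¹Bᵀ` are the Schur complements and `A^{-1/2}`
denotes the inverse of the positive-semidefinite square root of `A`. -/
theorem stmt16 {n m : ℕ} (hn : 1 ≤ n) (hm : 1 ≤ m)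
    (A : Matrix (Fin n) (Fin n) ℝ) (C : Matrix (Fin m) (Fin m) ℝ)
    (B : Matrix (Fin m) (Fin n) ℝ) (b₁ : Fin n → ℝ) (b₂ : Fin m → ℝ)
    (hAsymm : A.IsSymm) (hCsymm : C.IsSymm)
    (hM : (Matrix.fromBlocks A Bᵀ B C).PosDef)
    (hA : A.PosDef) (hC : C.PosDef)
    -- the quadratic objective function
    (H : ((Fin n → ℝ) × (Fin m → ℝ)) → ℝ)
    (hH : ∀ (x₁ : Fin n → ℝ) (x₂ : Fin m → ℝ), H (x₁, x₂) =
      1 / 2 * (x₁ ⬝ᵥ A.mulVec x₁ + 2 * (x₂ ⬝ᵥ B.mulVec x₁) + x₂ ⬝ᵥ C.mulVec x₂)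
        - b₁ ⬝ᵥ x₁ - b₂ ⬝ᵥ x₂)
    -- the minimal value H* (attained since M is positive definite)
    (Hstar : ℝ) (hHstarle : ∀ z, Hstar ≤ H z) (hHstarex : ∃ z, H z = Hstar)
    -- the alternating minimization sequence
    (x : ℕ → (Fin n → ℝ) × (Fin m → ℝ))
    (hinit : ∀ y₂, H (x 0) ≤ H ((x 0).1, y₂))
    (hstep1 : ∀ (k : ℕ) y₁, H ((x (k + 1)).1, (x k).2) ≤ H (y₁, (x k).2))
    (hstep2 : ∀ (k : ℕ) y₂, H (x (k + 1)) ≤ H ((x (k + 1)).1, y₂)) :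
    ∀ k : ℕ,
      H (x (k + 1)) - Hstar ≤
        (1 - lambdaMin ((posSemidefSqrt hA.posSemidef)⁻¹ * (A - Bᵀ * C⁻¹ * B) *
            (posSemidefSqrt hA.posSemidef)⁻¹)) *
        (1 - lambdaMin ((posSemidefSqrt hC.posSemidef)⁻¹ * (C - B * A⁻¹ * Bᵀ) *
            (posSemidefSqrt hC.posSemidef)⁻¹)) *
        (H (x k) - Hstar) :=
  stmt16_general hm A C B b₁ b₂ hM hA hC H hH Hstar hHstarle hHstarex x hinit hstep1 hstep2
end
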